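/- arXiv:1805.06791 — 5 statements merged into one kernel-verified Lean document; each statement's English description precedes it below -/
import Mathlib

section
/- Let m ≥ 1 and let z = (x,y) ∈ ℝ² with z ≠ 0, and let γ = (z(s), τ(s)) : [0,T] → ℝ³ be an absolutely continuous horizontal curve for the vector fields X = ∂_x + |z|^{2m} y ∂_t and Y = ∂_y − |z|^{2m} x ∂_t with |ż(s)| ≤ 1 a.e., starting at (x₀, 0, 0) with x₀ ≥ 0. Then there is a constant C > 0 depending only on m such that for all s ∈ [0,T], |z(s)|^{2m}|y(s)| + |x₀^{2m+1} − |z(s)|^{2m} x(s)| ≤ C (x₀^{2m} s + s^{2m+1}). -/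
/-!
The horizontality condition says `ẋ = α` and `ẏ = β`, so the planar part moves at speed at most
one: `|x(s) - x₀| ≤ s` and `|y(s)| ≤ s`. The rest is a pointwise estimate. With
`M = (x₀ + 2s)²` both `|z(s)|²` and `x₀²` lie in `[0, M]`, so the mean value theorem for
`t ↦ t^m` bounds `|x₀^(2m) - |z|^(2m)|` by `m M^(m-1) · 2s(x₀ + s)`; writing
`x₀^(2m+1) - |z|^(2m) x = (x₀^(2m) - |z|^(2m)) x₀ + |z|^(2m) (x₀ - x)` gives a bound
`(2m + 2) M^m s`, and `(x₀ + 2s)^(2m) ≤ 3^(2m) (x₀^(2m) + s^(2m))`.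
-/

open MeasureTheory Set

noncomputable section

/-- Euclidean norm on ℝ². -/
def nrm (z : ℝ × ℝ) : ℝ := Real.sqrt (z.1 ^ 2 + z.2 ^ 2)

/-- `|z|^(2m)` for a real parameter `m`. -/
def w2m (m : ℝ) (z : ℝ × ℝ) : ℝ := (z.1 ^ 2 + z.2 ^ 2) ^ m

/-- The vector field `X = ∂ₓ + |z|^(2m) y ∂_t` on ℝ³. -/
def Xvf (m : ℝ) (p : ℝ × ℝ × ℝ) : ℝ × ℝ × ℝ := (1, 0, w2m m (p.1, p.2.1) * p.2.1)

/-- The vector field `Y = ∂_y − |z|^(2m) x ∂_t` on ℝ³. -/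
def Yvf (m : ℝ) (p : ℝ × ℝ × ℝ) : ℝ × ℝ × ℝ := (0, 1, -(w2m m (p.1, p.2.1) * p.1))

/-- `γ` is an (absolutely continuous) horizontal curve on `[0, T]` with controls `α, β`. -/
def IsHorizontal (m : ℝ) (γ : ℝ → ℝ × ℝ × ℝ) (α β : ℝ → ℝ) (T : ℝ) : Prop :=
  ∀ t ∈ Icc (0 : ℝ) T,
    γ t = γ 0 + ∫ s in (0 : ℝ)..t, (α s • Xvf m (γ s) + β s • Yvf m (γ s))

/-- Length of a horizontal curve with controls `α, β` on `[0, T]`. -/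
def ccLength (α β : ℝ → ℝ) (T : ℝ) : ℝ := ∫ s in (0 : ℝ)..T, Real.sqrt (α s ^ 2 + β s ^ 2)

/-- The Carnot–Carathéodory distance associated with `X` and `Y`. -/
def ccDist (m : ℝ) (p q : ℝ × ℝ × ℝ) : ℝ :=
  sInf { L : ℝ | ∃ T, 0 ≤ T ∧ ∃ γ α β, IsHorizontal m γ α β T ∧
    γ 0 = p ∧ γ T = q ∧ L = ccLength α β T }

lemma norm_map_intervalIntegral_le {E F : Type*} [NormedAddCommGroup E] [NormedSpace ℝ E]
    [CompleteSpace E] [NormedAddCommGroup F] [NormedSpace ℝ F] [CompleteSpace F]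
    (L : E →L[ℝ] F) {f : ℝ → E} {C s : ℝ} (hC : 0 ≤ C) (hs : 0 ≤ s)
    (hf : ∀ u ∈ Ioc 0 s, ‖L (f u)‖ ≤ C) :
    ‖L (∫ u in (0 : ℝ)..s, f u)‖ ≤ C * s := by
  by_cases hint : IntervalIntegrable f volume 0 s
  · rw [← L.intervalIntegral_comp_comm hint]
    exact (intervalIntegral.norm_integral_le_of_norm_le_const (by rwa [uIoc_of_le hs])).trans_eq
      (by rw [sub_zero, abs_of_nonneg hs])
  · rw [intervalIntegral.integral_undef hint, map_zero, norm_zero]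
    positivity

lemma IsHorizontal.abs_sub_le {m T : ℝ} {γ : ℝ → ℝ × ℝ × ℝ} {α β : ℝ → ℝ}
    (hγ : IsHorizontal m γ α β T) (hctrl : ∀ s ∈ Icc (0 : ℝ) T, α s ^ 2 + β s ^ 2 ≤ 1)
    {s : ℝ} (hs : s ∈ Icc (0 : ℝ) T) :
    |(γ s).1 - (γ 0).1| ≤ s ∧ |(γ s).2.1 - (γ 0).2.1| ≤ s := by
  set f := fun u ↦ α u • Xvf m (γ u) + β u • Yvf m (γ u)
  have hincr : γ s - γ 0 = ∫ u in (0 : ℝ)..s, f u := by rw [hγ s hs, add_sub_cancel_left]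
  have hαβ : ∀ u ∈ Ioc 0 s, |α u| ≤ 1 ∧ |β u| ≤ 1 := fun u hu ↦ by
    have := hctrl u ⟨hu.1.le, hu.2.trans hs.2⟩
    constructor <;> rw [← sq_le_one_iff_abs_le_one] <;>
      nlinarith [sq_nonneg (α u), sq_nonneg (β u)]
  have hx := norm_map_intervalIntegral_le (ContinuousLinearMap.fst ℝ ℝ (ℝ × ℝ)) zero_le_one
    hs.1 (f := f) fun u hu ↦ by simpa [f, Xvf, Yvf] using (hαβ u hu).1
  have hy := norm_map_intervalIntegral_le
    ((ContinuousLinearMap.fst ℝ ℝ ℝ).comp (ContinuousLinearMap.snd ℝ ℝ (ℝ × ℝ))) zero_le_one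
    hs.1 (f := f) fun u hu ↦ by simpa [f, Xvf, Yvf] using (hαβ u hu).2
  rw [← hincr] at hx hy
  exact ⟨by simpa using hx, by simpa using hy⟩

lemma abs_rpow_sub_rpow_le {m M u v : ℝ} (hm : 1 ≤ m) (hu : 0 ≤ u) (hv : 0 ≤ v)
    (huM : u ≤ M) (hvM : v ≤ M) :
    |u ^ m - v ^ m| ≤ m * M ^ (m - 1) * |u - v| := by
  have hm₀ : 0 ≤ m := by linarith
  have h := Convex.norm_image_sub_le_of_norm_hasDerivWithin_le
    (f := fun t : ℝ ↦ t ^ m) (f' := fun t ↦ m * t ^ (m - 1)) (s := Icc 0 M)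
    (C := m * M ^ (m - 1))
    (fun t _ ↦ (Real.hasDerivAt_rpow_const (Or.inr hm)).hasDerivWithinAt)
    (fun t ht ↦ ?_) (convex_Icc 0 M) ⟨hv, hvM⟩ ⟨hu, huM⟩
  · simpa [Real.norm_eq_abs] using h
  · rw [Real.norm_eq_abs, abs_of_nonneg (by have := Real.rpow_nonneg ht.1 (m - 1); positivity)]
    gcongr
    · exact ht.1
    · exact ht.2

lemma rpow_add_two_mul_le {p x s : ℝ} (hp : 0 ≤ p) (hx : 0 ≤ x) (hs : 0 ≤ s) :
    (x + 2 * s) ^ p ≤ 3 ^ p * (x ^ p + s ^ p) := by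
  have hmax : max x s ^ p ≤ x ^ p + s ^ p := by
    rcases max_cases x s with ⟨h, -⟩ | ⟨h, -⟩ <;> rw [h] <;>
      linarith [Real.rpow_nonneg hx p, Real.rpow_nonneg hs p]
  calc (x + 2 * s) ^ p ≤ (3 * max x s) ^ p :=
        Real.rpow_le_rpow (by positivity) (by linarith [le_max_left x s, le_max_right x s]) hp
    _ = 3 ^ p * max x s ^ p := Real.mul_rpow (by norm_num) (le_max_of_le_left hx)
    _ ≤ 3 ^ p * (x ^ p + s ^ p) := by gcongr

lemma abs_weighted_sub_le {m x₀ a b s : ℝ} (hm : 1 ≤ m) (hx₀ : 0 ≤ x₀) (ha : |a - x₀| ≤ s)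
    (hb : |b| ≤ s) :
    (a ^ 2 + b ^ 2) ^ m * |b| + |(x₀ ^ 2) ^ m * x₀ - (a ^ 2 + b ^ 2) ^ m * a| ≤
      (2 * m + 2) * (((x₀ + 2 * s) ^ 2) ^ m * s) := by
  set u := a ^ 2 + b ^ 2
  set M := (x₀ + 2 * s) ^ 2
  have hs : 0 ≤ s := (abs_nonneg _).trans hb
  obtain ⟨ha₁, ha₂⟩ := abs_le.1 ha
  obtain ⟨hb₁, hb₂⟩ := abs_le.1 hb
  have hu : 0 ≤ u := by positivity
  have hM : 0 ≤ M := by positivity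
  have huM : u ≤ M := by nlinarith
  have hx₀M : x₀ ^ 2 ≤ M := by nlinarith
  have hdiff : |u - x₀ ^ 2| ≤ 2 * s * (x₀ + s) := by
    rw [abs_le]; constructor <;> nlinarith
  have hum : u ^ m ≤ M ^ m := Real.rpow_le_rpow hu huM (by linarith)
  have hMm : M ^ (m - 1) * M = M ^ m := by
    rw [← Real.rpow_add_one' hM (by linarith), sub_add_cancel]
  have hpow : |(x₀ ^ 2) ^ m - u ^ m| * x₀ ≤ 2 * m * (M ^ m * s) :=
    calc |(x₀ ^ 2) ^ m - u ^ m| * x₀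
        ≤ m * M ^ (m - 1) * (2 * s * (x₀ + s)) * x₀ := by
          gcongr
          rw [abs_sub_comm]
          exact (abs_rpow_sub_rpow_le hm hu (sq_nonneg _) huM hx₀M).trans (by gcongr)
      _ = 2 * m * s * (M ^ (m - 1) * (x₀ * (x₀ + s))) := by ring
      _ ≤ 2 * m * s * (M ^ (m - 1) * M) := by gcongr; nlinarith
      _ = 2 * m * (M ^ m * s) := by rw [hMm]; ring
  have hsplit : (x₀ ^ 2) ^ m * x₀ - u ^ m * a =
      ((x₀ ^ 2) ^ m - u ^ m) * x₀ + u ^ m * (x₀ - a) := by ring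
  calc u ^ m * |b| + |(x₀ ^ 2) ^ m * x₀ - u ^ m * a|
      ≤ u ^ m * |b| + (|(x₀ ^ 2) ^ m - u ^ m| * x₀ + u ^ m * |a - x₀|) := by
        rw [hsplit, abs_sub_comm a]
        gcongr
        refine (abs_add_le _ _).trans_eq ?_
        rw [abs_mul, abs_mul, abs_of_nonneg hx₀, abs_of_nonneg (Real.rpow_nonneg hu m)]
    _ ≤ M ^ m * s + (2 * m * (M ^ m * s) + M ^ m * s) := by gcongr
    _ = (2 * m + 2) * (M ^ m * s) := by ring

lemma w2m_estimate {m x₀ a b s : ℝ} (hm : 1 ≤ m) (hx₀ : 0 ≤ x₀) (ha : |a - x₀| ≤ s)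
    (hb : |b| ≤ s) :
    w2m m (a, b) * |b| + |x₀ ^ (2 * m + 1) - w2m m (a, b) * a| ≤
      (2 * m + 2) * 3 ^ (2 * m) * (x₀ ^ (2 * m) * s + s ^ (2 * m + 1)) := by
  have hs : 0 ≤ s := (abs_nonneg _).trans hb
  have hsq {x : ℝ} (hx : 0 ≤ x) : (x ^ 2) ^ m = x ^ (2 * m) := by
    rw [Real.rpow_mul hx, Real.rpow_two]
  have hx₀pow : x₀ ^ (2 * m + 1) = (x₀ ^ 2) ^ m * x₀ := by
    rw [Real.rpow_add_one' hx₀ (by linarith), hsq hx₀]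
  calc w2m m (a, b) * |b| + |x₀ ^ (2 * m + 1) - w2m m (a, b) * a|
      ≤ (2 * m + 2) * ((x₀ + 2 * s) ^ (2 * m) * s) := by
        rw [hx₀pow, ← hsq (by linarith)]
        exact abs_weighted_sub_le hm hx₀ ha hb
    _ ≤ (2 * m + 2) * (3 ^ (2 * m) * (x₀ ^ (2 * m) + s ^ (2 * m)) * s) := by
        gcongr
        exact rpow_add_two_mul_le (by linarith) hx₀ hs
    _ = (2 * m + 2) * 3 ^ (2 * m) * (x₀ ^ (2 * m) * s + s ^ (2 * m + 1)) := by
        rw [Real.rpow_add_one' hs (by linarith)]; ring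

/-- A priori estimate along horizontal curves with `|ż| ≤ 1` starting at `(x₀,0,0)`:
`|z(s)|^(2m)|y(s)| + |x₀^(2m+1) − |z(s)|^(2m) x(s)| ≤ C (x₀^(2m) s + s^(2m+1))`. -/
theorem stmt2 (m : ℝ) (hm : 1 ≤ m) :
    ∃ C : ℝ, 0 < C ∧ ∀ (x₀ T : ℝ) (γ : ℝ → ℝ × ℝ × ℝ) (α β : ℝ → ℝ),
      0 ≤ x₀ → 0 ≤ T →
      IsHorizontal m γ α β T →
      γ 0 = (x₀, 0, 0) →
      (∀ s ∈ Icc (0 : ℝ) T, α s ^ 2 + β s ^ 2 ≤ 1) →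
      ∀ s ∈ Icc (0 : ℝ) T,
        w2m m ((γ s).1, (γ s).2.1) * |(γ s).2.1| +
          |x₀ ^ (2 * m + 1) - w2m m ((γ s).1, (γ s).2.1) * (γ s).1| ≤
        C * (x₀ ^ (2 * m) * s + s ^ (2 * m + 1)) := by
  refine ⟨(2 * m + 2) * 3 ^ (2 * m), by positivity, ?_⟩
  intro x₀ T γ α β hx₀ _ hγ h0 hctrl s hs
  obtain ⟨hx, hy⟩ := hγ.abs_sub_le hctrl hs
  rw [h0] at hx hy
  exact w2m_estimate hm hx₀ hx (by simpa using hy)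
end
end

section
/- Let m ≥ 1, x₀ ≥ 0, and let γ be a unit-speed horizontal curve of length T for X = ∂_x + |z|^{2m} y ∂_t, Y = ∂_y − |z|^{2m} x ∂_t, joining (x₀, 0, 0) to (ξ, η, τ). Then there is C > 0 depending only on m such that T ≥ C^{-1} min{ |τ + x₀^{2m+1} η|^{1/2} / x₀^m, |τ + x₀^{2m+1} η|^{1/(2m+2)} }. -/
/-!
The functional `Λ(x, y, t) = x₀^(2m+1) y + t` vanishes at `(x₀, 0, 0)` and equals
`τ + x₀^(2m+1) η` at the endpoint. Writing `z = x + i y` for the planar projection of the curve and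
`g(z) = |z|^(2m) z`, the derivative of `Λ ∘ γ` is `Re((β + i α)(g(x₀) - g(z)))`, which vanishes at
the starting point. Since `g` is `(2m+1) R^(2m)`-Lipschitz on the disc of radius `R` and
`|z(s) - x₀| ≤ s`, integration gives `|τ + x₀^(2m+1) η| ≤ (2m+1) (x₀+T)^(2m) T²`; comparing `x₀`
with `T` yields the two regimes of the minimum.
-/

open MeasureTheory Set

noncomputable section

theorem abs_rpow_sub_rpow_le_s3 {p R u v : ℝ} (hp : 1 ≤ p) (hu : u ∈ Icc 0 R) (hv : v ∈ Icc 0 R) :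
    |u ^ p - v ^ p| ≤ p * R ^ (p - 1) * |u - v| := by
  have hderiv : ∀ x ∈ Icc 0 R, ‖p * x ^ (p - 1)‖ ≤ p * R ^ (p - 1) := by
    rintro x ⟨hx₀, hxR⟩
    rw [Real.norm_eq_abs, abs_of_nonneg (by positivity)]
    gcongr
  exact Convex.norm_image_sub_le_of_norm_hasDerivWithin_le
    (fun x _ => (Real.hasDerivAt_rpow_const (Or.inr hp)).hasDerivWithinAt) hderiv
    (convex_Icc 0 R) hv hu

theorem norm_rpow_smul_sub_rpow_smul_le {E : Type*} [SeminormedAddCommGroup E] [NormedSpace ℝ E]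
    {p R : ℝ} (hp : 1 ≤ p) {u v : E} (hu : ‖u‖ ≤ R) (hv : ‖v‖ ≤ R) :
    ‖‖u‖ ^ p • u - ‖v‖ ^ p • v‖ ≤ (p + 1) * R ^ p * ‖u - v‖ := by
  have hR : 0 ≤ R := (norm_nonneg u).trans hu
  have hsplit : ‖u‖ ^ p • u - ‖v‖ ^ p • v = ‖u‖ ^ p • (u - v) + (‖u‖ ^ p - ‖v‖ ^ p) • v := by
    rw [smul_sub, sub_smul]; abel
  have hpow : |‖u‖ ^ p - ‖v‖ ^ p| ≤ p * R ^ (p - 1) * ‖u - v‖ :=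
    (abs_rpow_sub_rpow_le_s3 hp ⟨norm_nonneg u, hu⟩ ⟨norm_nonneg v, hv⟩).trans
      (by gcongr; exact abs_norm_sub_norm_le u v)
  rw [hsplit]
  calc ‖‖u‖ ^ p • (u - v) + (‖u‖ ^ p - ‖v‖ ^ p) • v‖
      ≤ R ^ p * ‖u - v‖ + p * R ^ (p - 1) * ‖u - v‖ * R := by
        refine (norm_add_le _ _).trans (add_le_add ?_ ?_) <;> rw [norm_smul, Real.norm_eq_abs]
        · rw [abs_of_nonneg (by positivity)]
          gcongr
        · gcongr
    _ = (p + 1) * R ^ p * ‖u - v‖ := by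
        rw [show R ^ p = R ^ (p - 1) * R by
          rw [← Real.rpow_add_one' hR (by linarith), sub_add_cancel]]
        ring

open Complex in
def planeProj : (ℝ × ℝ × ℝ) →L[ℝ] ℂ :=
  equivRealProdCLM.symm.toContinuousLinearMap.comp
    ((ContinuousLinearMap.fst ℝ ℝ (ℝ × ℝ)).prod
      ((ContinuousLinearMap.fst ℝ ℝ ℝ).comp (ContinuousLinearMap.snd ℝ ℝ (ℝ × ℝ))))

@[simp]
theorem planeProj_apply (p : ℝ × ℝ × ℝ) : planeProj p = ⟨p.1, p.2.1⟩ := rfl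

def heightFunctional (c : ℝ) : (ℝ × ℝ × ℝ) →L[ℝ] ℝ :=
  c • (ContinuousLinearMap.fst ℝ ℝ ℝ).comp (ContinuousLinearMap.snd ℝ ℝ (ℝ × ℝ)) +
    (ContinuousLinearMap.snd ℝ ℝ ℝ).comp (ContinuousLinearMap.snd ℝ ℝ (ℝ × ℝ))

@[simp]
theorem heightFunctional_apply (c : ℝ) (p : ℝ × ℝ × ℝ) :
    heightFunctional c p = c * p.2.1 + p.2.2 :=
  rfl

theorem Complex.norm_mk_eq_one {a b : ℝ} (h : a ^ 2 + b ^ 2 = 1) : ‖(⟨a, b⟩ : ℂ)‖ = 1 := by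
  simp [Complex.norm_eq_sqrt_sq_add_sq, h]

theorem planeProj_control (m a b : ℝ) (q : ℝ × ℝ × ℝ) :
    planeProj (a • Xvf m q + b • Yvf m q) = ⟨a, b⟩ := by
  simp [Xvf, Yvf]

theorem w2m_eq_norm_rpow (m : ℝ) (q : ℝ × ℝ × ℝ) :
    w2m m (q.1, q.2.1) = ‖planeProj q‖ ^ (2 * m) := by
  rw [Real.rpow_mul (norm_nonneg _), Real.rpow_two, Complex.sq_norm]
  simp [w2m, Complex.normSq_mk, sq]

theorem heightFunctional_control {m x₀ : ℝ} (hm : 0 ≤ m) (hx₀ : 0 ≤ x₀) (a b : ℝ)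
    (q : ℝ × ℝ × ℝ) :
    heightFunctional (x₀ ^ (2 * m + 1)) (a • Xvf m q + b • Yvf m q) =
      ((⟨b, a⟩ : ℂ) *
        (‖(x₀ : ℂ)‖ ^ (2 * m) • (x₀ : ℂ) - ‖planeProj q‖ ^ (2 * m) • planeProj q)).re := by
  have hc : x₀ ^ (2 * m + 1) = ‖(x₀ : ℂ)‖ ^ (2 * m) * x₀ := by
    rw [Complex.norm_real, Real.norm_of_nonneg hx₀, Real.rpow_add_one' hx₀ (by linarith)]
  simp [Xvf, Yvf, w2m_eq_norm_rpow, hc]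
  ring

namespace IsHorizontal

variable {m T : ℝ} {γ : ℝ → ℝ × ℝ × ℝ} {α β : ℝ → ℝ}

theorem map_eq_add_integral (hγ : IsHorizontal m γ α β T)
    (hint : IntervalIntegrable (fun s => α s • Xvf m (γ s) + β s • Yvf m (γ s)) volume 0 T)
    {E : Type*} [NormedAddCommGroup E] [NormedSpace ℝ E] [CompleteSpace E]
    (L : (ℝ × ℝ × ℝ) →L[ℝ] E) {t : ℝ} (ht : t ∈ Icc 0 T) :
    L (γ t) = L (γ 0) + ∫ s in (0 : ℝ)..t, L (α s • Xvf m (γ s) + β s • Yvf m (γ s)) := by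
  have hsub : uIcc 0 t ⊆ uIcc 0 T := by
    rw [uIcc_of_le ht.1, uIcc_of_le (ht.1.trans ht.2)]
    exact Icc_subset_Icc le_rfl ht.2
  rw [hγ t ht, map_add, L.intervalIntegral_comp_comm (hint.mono_set hsub)]

theorem norm_planeProj_sub_le (hγ : IsHorizontal m γ α β T)
    (hint : IntervalIntegrable (fun s => α s • Xvf m (γ s) + β s • Yvf m (γ s)) volume 0 T)
    (hunit : ∀ s ∈ Icc 0 T, α s ^ 2 + β s ^ 2 = 1) {t : ℝ} (ht : t ∈ Icc 0 T) :
    ‖planeProj (γ t) - planeProj (γ 0)‖ ≤ t := by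
  have hspeed : ∀ s ∈ uIoc 0 t, ‖planeProj (α s • Xvf m (γ s) + β s • Yvf m (γ s))‖ ≤ 1 := by
    intro s hs
    rw [uIoc_of_le ht.1] at hs
    rw [planeProj_control, Complex.norm_mk_eq_one (hunit s ⟨hs.1.le, hs.2.trans ht.2⟩)]
  rw [hγ.map_eq_add_integral hint planeProj ht, add_sub_cancel_left]
  simpa [abs_of_nonneg ht.1] using intervalIntegral.norm_integral_le_of_norm_le_const hspeed

theorem abs_heightFunctional_le (hγ : IsHorizontal m γ α β T) (hm : 1 ≤ 2 * m) {x₀ : ℝ}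
    (hx₀ : 0 ≤ x₀) (hT : 0 ≤ T) (h0 : γ 0 = (x₀, 0, 0))
    (hunit : ∀ s ∈ Icc 0 T, α s ^ 2 + β s ^ 2 = 1) :
    |heightFunctional (x₀ ^ (2 * m + 1)) (γ T)| ≤ (2 * m + 1) * (x₀ + T) ^ (2 * m) * T ^ 2 := by
  have hK : 0 ≤ (2 * m + 1) * (x₀ + T) ^ (2 * m) := by
    have : 0 ≤ m := by linarith
    positivity
  have hstart : heightFunctional (x₀ ^ (2 * m + 1)) (γ 0) = 0 := by simp [h0]
  -- the Bochner integral of a non-integrable control is `0`, which pins `γ T` to `γ 0`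
  by_cases hint : IntervalIntegrable (fun s => α s • Xvf m (γ s) + β s • Yvf m (γ s)) volume 0 T
  swap
  · have hstuck : γ T = γ 0 := by
      simpa [intervalIntegral.integral_undef hint] using hγ T ⟨hT, le_rfl⟩
    rw [hstuck, hstart, abs_zero]
    positivity
  have hz₀ : planeProj (γ 0) = x₀ := by simp [h0, Complex.ext_iff]
  have hrate : ∀ s ∈ uIoc 0 T, ‖heightFunctional (x₀ ^ (2 * m + 1))
      (α s • Xvf m (γ s) + β s • Yvf m (γ s))‖ ≤ (2 * m + 1) * (x₀ + T) ^ (2 * m) * T := by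
    intro s hs
    rw [uIoc_of_le hT] at hs
    have hsT : s ∈ Icc 0 T := ⟨hs.1.le, hs.2⟩
    have hdist := hγ.norm_planeProj_sub_le hint hunit hsT
    rw [hz₀] at hdist
    have hx₀norm : ‖(x₀ : ℂ)‖ = x₀ := by rw [Complex.norm_real, Real.norm_of_nonneg hx₀]
    have hnorm₀ : ‖(x₀ : ℂ)‖ ≤ x₀ + T := by linarith
    have hnorm : ‖planeProj (γ s)‖ ≤ x₀ + T := by
      linarith [norm_le_insert' (planeProj (γ s)) x₀, hs.2]
    rw [heightFunctional_control (by linarith) hx₀, Real.norm_eq_abs]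
    calc _ ≤ ‖(⟨β s, α s⟩ : ℂ) * (‖(x₀ : ℂ)‖ ^ (2 * m) • (x₀ : ℂ) -
            ‖planeProj (γ s)‖ ^ (2 * m) • planeProj (γ s))‖ := Complex.abs_re_le_norm _
      _ ≤ (2 * m + 1) * (x₀ + T) ^ (2 * m) * ‖(x₀ : ℂ) - planeProj (γ s)‖ := by
        rw [norm_mul, Complex.norm_mk_eq_one (by linarith [hunit s hsT]), one_mul]
        exact norm_rpow_smul_sub_rpow_smul_le hm hnorm₀ hnorm
      _ ≤ (2 * m + 1) * (x₀ + T) ^ (2 * m) * T := by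
        rw [norm_sub_rev]
        gcongr
        linarith [hs.2]
  rw [hγ.map_eq_add_integral hint _ ⟨hT, le_rfl⟩, hstart, zero_add]
  calc _ ≤ (2 * m + 1) * (x₀ + T) ^ (2 * m) * T * |T - 0| :=
        intervalIntegral.norm_integral_le_of_norm_le_const hrate
    _ = (2 * m + 1) * (x₀ + T) ^ (2 * m) * T ^ 2 := by rw [sub_zero, abs_of_nonneg hT]; ring

end IsHorizontal

theorem rpow_one_div_le_of_le_mul_rpow {A K b p : ℝ} (hA : 0 ≤ A) (hK : 1 ≤ K) (hb : 0 ≤ b)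
    (hp : 1 ≤ p) (h : A ≤ K * b ^ p) : A ^ (1 / p) ≤ K * b := by
  rw [one_div, Real.rpow_inv_le_iff_of_pos hA (by positivity) (by linarith),
    Real.mul_rpow (by linarith) hb]
  exact h.trans (by gcongr; exact Real.self_le_rpow_of_one_le hK hp)

section EndpointBound

variable {m A x₀ T : ℝ}

theorem rpow_one_div_two_mul_add_two_le (hm : 0 ≤ m) (hA : 0 ≤ A) (hx₀ : 0 ≤ x₀) (hx₀T : x₀ ≤ T)
    (hbound : A ≤ (2 * m + 1) * (x₀ + T) ^ (2 * m) * T ^ 2) :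
    A ^ (1 / (2 * m + 2)) ≤ (2 * m + 1) * 2 ^ (2 * m) * T := by
  have hT : 0 ≤ T := hx₀.trans hx₀T
  refine rpow_one_div_le_of_le_mul_rpow hA ?_ hT (by linarith) (hbound.trans ?_)
  · exact one_le_mul_of_one_le_of_one_le (by linarith) (Real.one_le_rpow one_le_two (by positivity))
  calc (2 * m + 1) * (x₀ + T) ^ (2 * m) * T ^ 2 ≤ (2 * m + 1) * (2 * T) ^ (2 * m) * T ^ 2 := by
        gcongr; linarith
    _ = (2 * m + 1) * 2 ^ (2 * m) * T ^ (2 * m + 2) := by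
        rw [Real.mul_rpow (by norm_num) hT, Real.rpow_add' hT (by linarith), Real.rpow_two]
        ring

theorem rpow_one_div_two_div_rpow_le (hm : 0 ≤ m) (hA : 0 ≤ A) (hT : 0 ≤ T) (hx₀ : 0 < x₀)
    (hTx₀ : T ≤ x₀) (hbound : A ≤ (2 * m + 1) * (x₀ + T) ^ (2 * m) * T ^ 2) :
    A ^ ((1 : ℝ) / 2) / x₀ ^ m ≤ (2 * m + 1) * 2 ^ (2 * m) * T := by
  rw [div_le_iff₀ (by positivity), mul_assoc]
  refine rpow_one_div_le_of_le_mul_rpow hA ?_ (by positivity) (by norm_num) (hbound.trans ?_)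
  · exact one_le_mul_of_one_le_of_one_le (by linarith) (Real.one_le_rpow one_le_two (by positivity))
  calc (2 * m + 1) * (x₀ + T) ^ (2 * m) * T ^ 2 ≤ (2 * m + 1) * (2 * x₀) ^ (2 * m) * T ^ 2 := by
        gcongr; linarith
    _ = (2 * m + 1) * 2 ^ (2 * m) * (T * x₀ ^ m) ^ (2 : ℝ) := by
        rw [Real.mul_rpow (by norm_num) hx₀.le, Real.rpow_two, mul_pow,
          ← Real.rpow_mul_natCast hx₀.le]
        ring_nf

end EndpointBound

/-- Lower bound for the time needed by a unit-speed horizontal curve from `(x₀,0,0)`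
to `(ξ,η,τ)`:  `T ≥ C⁻¹ min{ |τ + x₀^(2m+1) η|^(1/2)/x₀^m , |τ + x₀^(2m+1) η|^(1/(2m+2)) }`
(with the first term interpreted as `+∞` when `x₀ = 0`). -/
theorem stmt3 (m : ℝ) (hm : 1 ≤ m) :
    ∃ C : ℝ, 0 < C ∧ ∀ (x₀ T ξ η τ : ℝ) (γ : ℝ → ℝ × ℝ × ℝ) (α β : ℝ → ℝ),
      0 ≤ x₀ → 0 ≤ T →
      IsHorizontal m γ α β T →
      γ 0 = (x₀, 0, 0) → γ T = (ξ, η, τ) →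
      (∀ s ∈ Icc (0 : ℝ) T, α s ^ 2 + β s ^ 2 = 1) →
      (0 < x₀ →
        C⁻¹ * min (|τ + x₀ ^ (2 * m + 1) * η| ^ ((1 : ℝ) / 2) / x₀ ^ m)
          (|τ + x₀ ^ (2 * m + 1) * η| ^ (1 / (2 * m + 2))) ≤ T) ∧
      (x₀ = 0 → C⁻¹ * |τ + x₀ ^ (2 * m + 1) * η| ^ (1 / (2 * m + 2)) ≤ T) := by
  have hm₀ : 0 ≤ m := by linarith
  have hC : 0 < (2 * m + 1) * 2 ^ (2 * m) := by positivity
  refine ⟨_, hC, fun x₀ T ξ η τ γ α β hx₀ hT hγ h0 hγT hunit => ?_⟩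
  have hbound := hγ.abs_heightFunctional_le (by linarith) hx₀ hT h0 hunit
  rw [hγT, heightFunctional_apply, add_comm] at hbound
  simp only [inv_mul_le_iff₀ hC]
  have hlong : x₀ ≤ T → |τ + x₀ ^ (2 * m + 1) * η| ^ (1 / (2 * m + 2)) ≤
      (2 * m + 1) * 2 ^ (2 * m) * T := fun hx₀T =>
    rpow_one_div_two_mul_add_two_le hm₀ (abs_nonneg _) hx₀ hx₀T hbound
  refine ⟨fun hx₀pos => ?_, fun hx₀zero => hlong (hx₀zero ▸ hT)⟩
  rcases le_total T x₀ with hTx₀ | hx₀T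
  · exact (min_le_left _ _).trans
      (rpow_one_div_two_div_rpow_le hm₀ (abs_nonneg _) hT hx₀pos hTx₀ hbound)
  · exact (min_le_right _ _).trans (hlong hx₀T)
end
end

section
/- Let m ≥ 1 and let d be the Carnot–Carathéodory distance of X = ∂_x + |z|^{2m} y ∂_t and Y = ∂_y − |z|^{2m} x ∂_t on ℝ³. Then for every z ∈ ℂ and t, τ ∈ ℝ there is a constant C > 0 depending only on m with d((z,t),(z,τ)) ≤ C min{ |τ−t|^{1/(2m+2)}, |τ−t|^{1/2}/|z|^m }. -/
open MeasureTheory Set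

noncomputable section

/-!
In cylindrical coordinates `(ρ, φ, t)` a horizontal curve satisfies `dt = -ρ^(2m+2) dφ`: radial
moves keep `t` fixed and a rotation by `a` at radius `ρ` changes `t` by `-ρ^(2m+2) a`. Going
out radially from `r` to `ρ`, rotating by `a`, coming back and rotating by `-a` is a closed loop
in the plane of length `2|ρ - r| + (ρ + r)|a|` that lifts `t` by `(r^(2m+2) - ρ^(2m+2)) a`.
With `h = |τ - t|^(1/(2m+2))`, the choice `ρ = r + h` gives length at most `4h`, and when
`h ≤ r` the choice `ρ = r - δ`, `δ = h^(m+1)/r^m`, gives length at most `4δ`.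
-/

section Concat

variable {E : Type*}

def concatAt (a : ℝ) (f g : ℝ → E) (s : ℝ) : E := if s ≤ a then f s else g (s - a)

lemma concatAt_of_le {a s : ℝ} (f g : ℝ → E) (hs : s ≤ a) : concatAt a f g s = f s := if_pos hs

lemma concatAt_of_lt {a s : ℝ} (f g : ℝ → E) (hs : a < s) : concatAt a f g s = g (s - a) :=
  if_neg hs.not_ge

variable [NormedAddCommGroup E] {a t : ℝ} {f g : ℝ → E}

lemma intervalIntegrable_concatAt (ha : 0 ≤ a) (hat : a ≤ t)
    (hf : IntervalIntegrable f volume 0 a) (hg : IntervalIntegrable g volume 0 (t - a)) :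
    IntervalIntegrable (concatAt a f g) volume 0 t := by
  have hg' : IntervalIntegrable (fun s => g (s - a)) volume a t := by
    simpa using hg.comp_sub_right a
  refine IntervalIntegrable.trans (b := a) (hf.congr fun s hs => ?_) (hg'.congr fun s hs => ?_)
  · rw [uIoc_of_le ha] at hs; exact (concatAt_of_le f g hs.2).symm
  · rw [uIoc_of_le hat] at hs; exact (concatAt_of_lt f g hs.1).symm

lemma integral_concatAt [NormedSpace ℝ E] (ha : 0 ≤ a) (hat : a ≤ t)
    (hf : IntervalIntegrable f volume 0 a) (hg : IntervalIntegrable g volume 0 (t - a)) :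
    ∫ s in 0..t, concatAt a f g s = (∫ s in 0..a, f s) + ∫ s in 0..(t - a), g s := by
  have hint := intervalIntegrable_concatAt ha hat hf hg
  rw [← intervalIntegral.integral_add_adjacent_intervals (b := a)
    (hint.mono_set (by simp [uIcc_of_le ha, uIcc_of_le (ha.trans hat), Icc_subset_Icc_right hat]))
    (hint.mono_set (by simp [uIcc_of_le hat, uIcc_of_le (ha.trans hat), Icc_subset_Icc_left ha]))]
  congr 1
  · exact intervalIntegral.integral_congr fun s hs => by
      rw [uIcc_of_le ha] at hs; exact concatAt_of_le f g hs.2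
  · rw [intervalIntegral.integral_congr_ae (g := fun s => g (s - a)) (Filter.Eventually.of_forall
      fun s hs => by rw [uIoc_of_le hat] at hs; exact concatAt_of_lt f g hs.1),
      intervalIntegral.integral_comp_sub_right, sub_self]

end Concat

/-- The integrability clauses are what make joins concatenate: `IsHorizontal` and `ccLength` are
stated with Bochner integrals, which vanish on non-integrable integrands. -/
def HorizontalJoin (m : ℝ) (p q : ℝ × ℝ × ℝ) (L : ℝ) : Prop :=
  ∃ T, 0 ≤ T ∧ ∃ γ α β, IsHorizontal m γ α β T ∧ γ 0 = p ∧ γ T = q ∧ ccLength α β T = L ∧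
    IntervalIntegrable (fun s => α s • Xvf m (γ s) + β s • Yvf m (γ s)) volume 0 T ∧
    IntervalIntegrable (fun s => √(α s ^ 2 + β s ^ 2)) volume 0 T

namespace HorizontalJoin

variable {m L L' : ℝ} {p q r : ℝ × ℝ × ℝ}

lemma ccDist_le (h : HorizontalJoin m p q L) : ccDist m p q ≤ L := by
  obtain ⟨T, hT, γ, α, β, hγ, hp, hq, hL, -⟩ := h
  refine csInf_le ⟨0, ?_⟩ ⟨T, hT, γ, α, β, hγ, hp, hq, hL.symm⟩
  rintro _ ⟨T, hT, γ, α, β, -, -, -, rfl⟩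
  exact intervalIntegral.integral_nonneg hT fun s _ => Real.sqrt_nonneg _

lemma trans (h₁ : HorizontalJoin m p q L) (h₂ : HorizontalJoin m q r L') :
    HorizontalJoin m p r (L + L') := by
  obtain ⟨T₁, hT₁, γ₁, α₁, β₁, hγ₁, hp, hq, rfl, hF₁, hv₁⟩ := h₁
  obtain ⟨T₂, hT₂, γ₂, α₂, β₂, hγ₂, hq', hr, rfl, hF₂, hv₂⟩ := h₂
  have hF : (fun s => concatAt T₁ α₁ α₂ s • Xvf m (concatAt T₁ γ₁ γ₂ s)
        + concatAt T₁ β₁ β₂ s • Yvf m (concatAt T₁ γ₁ γ₂ s))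
      = concatAt T₁ (fun s => α₁ s • Xvf m (γ₁ s) + β₁ s • Yvf m (γ₁ s))
          (fun s => α₂ s • Xvf m (γ₂ s) + β₂ s • Yvf m (γ₂ s)) := by
    funext s; unfold concatAt; split_ifs <;> rfl
  have hv : (fun s => √(concatAt T₁ α₁ α₂ s ^ 2 + concatAt T₁ β₁ β₂ s ^ 2))
      = concatAt T₁ (fun s => √(α₁ s ^ 2 + β₁ s ^ 2)) (fun s => √(α₂ s ^ 2 + β₂ s ^ 2)) := by
    funext s; unfold concatAt; split_ifs <;> rfl
  have hT : T₁ ≤ T₁ + T₂ := le_add_of_nonneg_right hT₂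
  refine ⟨T₁ + T₂, hT₁.trans hT, concatAt T₁ γ₁ γ₂, concatAt T₁ α₁ α₂, concatAt T₁ β₁ β₂,
    fun t ht => ?_, by rw [concatAt_of_le _ _ hT₁, hp], ?_, ?_, ?_, ?_⟩
  · rw [hF, concatAt_of_le _ _ hT₁]
    rcases le_or_gt t T₁ with htT | htT
    · rw [concatAt_of_le _ _ htT, hγ₁ t ⟨ht.1, htT⟩]
      congr 1
      refine intervalIntegral.integral_congr fun s hs => Eq.symm ?_
      rw [uIcc_of_le ht.1] at hs
      exact concatAt_of_le _ _ (hs.2.trans htT)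
    · have ht' : t - T₁ ∈ Icc 0 T₂ := ⟨by linarith, by linarith [ht.2]⟩
      rw [concatAt_of_lt _ _ htT, hγ₂ _ ht', hq', ← hq, hγ₁ T₁ ⟨hT₁, le_rfl⟩,
        integral_concatAt hT₁ htT.le hF₁
          (hF₂.mono_set (uIcc_subset_uIcc_left (by rwa [uIcc_of_le hT₂]))), add_assoc]
  · rcases hT₂.eq_or_lt with h0 | h0
    · rw [← h0, add_zero, concatAt_of_le _ _ le_rfl, hq, ← hq', h0, hr]
    · rw [concatAt_of_lt _ _ (by linarith), add_sub_cancel_left, hr]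
  · unfold ccLength
    rw [hv, integral_concatAt hT₁ hT hv₁ (by rwa [add_sub_cancel_left]), add_sub_cancel_left]
  · rw [hF]; exact intervalIntegrable_concatAt hT₁ hT hF₁ (by rwa [add_sub_cancel_left])
  · rw [hv]; exact intervalIntegrable_concatAt hT₁ hT hv₁ (by rwa [add_sub_cancel_left])

lemma of_hasDerivAt {γ F : ℝ → ℝ × ℝ × ℝ} {α β : ℝ → ℝ} {T : ℝ} (hT : 0 ≤ T)
    (hα : Continuous α) (hβ : Continuous β) (hF : Continuous F)
    (hγ : ∀ s, HasDerivAt γ (F s) s) (hfield : ∀ s, α s • Xvf m (γ s) + β s • Yvf m (γ s) = F s) :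
    HorizontalJoin m (γ 0) (γ T) (ccLength α β T) := by
  have hfield' : (fun s => α s • Xvf m (γ s) + β s • Yvf m (γ s)) = F := funext hfield
  refine ⟨T, hT, γ, α, β, fun t _ => ?_, rfl, rfl, rfl, hfield' ▸ hF.intervalIntegrable 0 T,
    (by fun_prop : Continuous fun s => √(α s ^ 2 + β s ^ 2)).intervalIntegrable 0 T⟩
  rw [hfield',
    intervalIntegral.integral_eq_sub_of_hasDerivAt (fun s _ => hγ s) (hF.intervalIntegrable 0 t)]
  abel

end HorizontalJoin

def cyl (ρ φ t : ℝ) : ℝ × ℝ × ℝ := (ρ * Real.cos φ, ρ * Real.sin φ, t)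

lemma w2m_cyl (m ρ φ t : ℝ) : w2m m ((cyl ρ φ t).1, (cyl ρ φ t).2.1) = (ρ ^ 2) ^ m := by
  simp only [w2m, cyl]
  congr 1
  linear_combination ρ ^ 2 * Real.sin_sq_add_cos_sq φ

lemma horizontalJoin_radial (m r ρ φ t : ℝ) :
    HorizontalJoin m (cyl r φ t) (cyl ρ φ t) |ρ - r| := by
  have h := HorizontalJoin.of_hasDerivAt (m := m) (γ := fun s => cyl (r + (ρ - r) * s) φ t)
    (α := fun _ => (ρ - r) * Real.cos φ) (β := fun _ => (ρ - r) * Real.sin φ)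
    (F := fun _ => ((ρ - r) * Real.cos φ, (ρ - r) * Real.sin φ, 0)) zero_le_one
    continuous_const continuous_const continuous_const (fun s => by
      refine HasDerivAt.prodMk ?_ (HasDerivAt.prodMk ?_ (hasDerivAt_const _ _)) <;>
      simpa using (((hasDerivAt_id s).const_mul (ρ - r)).const_add r).mul_const _)
    (fun s => by
      simp only [Xvf, Yvf, cyl, Prod.smul_mk, smul_eq_mul, Prod.mk_add_mk]
      exact Prod.ext (by ring) (Prod.ext (by ring) (by ring)))
  convert h using 1
  · simp [cyl]
  · simp [cyl]
  · have hv : ((ρ - r) * Real.cos φ) ^ 2 + ((ρ - r) * Real.sin φ) ^ 2 = (ρ - r) ^ 2 := by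
      linear_combination (ρ - r) ^ 2 * Real.cos_sq_add_sin_sq φ
    simp [ccLength, hv, Real.sqrt_sq_eq_abs]

lemma horizontalJoin_arc (m ρ φ a t : ℝ) :
    HorizontalJoin m (cyl ρ φ t) (cyl ρ (φ + a) (t - (ρ ^ 2) ^ m * ρ ^ 2 * a)) |ρ * a| := by
  set K := (ρ ^ 2) ^ m * ρ ^ 2
  have hθ (s : ℝ) : HasDerivAt (fun s => φ + a * s) a s := by
    simpa using ((hasDerivAt_id s).const_mul a).const_add φ
  have h := HorizontalJoin.of_hasDerivAt (m := m) (γ := fun s => cyl ρ (φ + a * s) (t - K * a * s))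
    (α := fun s => -(ρ * a * Real.sin (φ + a * s))) (β := fun s => ρ * a * Real.cos (φ + a * s))
    (F := fun s => (-(ρ * a * Real.sin (φ + a * s)), ρ * a * Real.cos (φ + a * s), -(K * a)))
    zero_le_one (by fun_prop) (by fun_prop) (by fun_prop) (fun s => by
      refine HasDerivAt.prodMk ?_ (HasDerivAt.prodMk ?_ ?_)
      · exact ((hθ s).cos.const_mul ρ).congr_deriv (by ring)
      · exact ((hθ s).sin.const_mul ρ).congr_deriv (by ring)
      · simpa using ((hasDerivAt_id s).const_mul (K * a)).const_sub t)
    (fun s => by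
      simp only [Xvf, Yvf, w2m_cyl]
      simp only [cyl, Prod.smul_mk, smul_eq_mul, Prod.mk_add_mk]
      refine Prod.ext (by ring) (Prod.ext (by ring) ?_)
      linear_combination (-K * a) * Real.sin_sq_add_cos_sq (φ + a * s))
  have hv (s : ℝ) : (-(ρ * a * Real.sin (φ + a * s))) ^ 2 + (ρ * a * Real.cos (φ + a * s)) ^ 2
      = (ρ * a) ^ 2 := by
    linear_combination (ρ * a) ^ 2 * Real.sin_sq_add_cos_sq (φ + a * s)
  convert h using 1
  · simp [cyl]
  · simp [cyl]
  · simp only [ccLength, hv, Real.sqrt_sq_eq_abs]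
    simp

lemma horizontalJoin_loop (m : ℝ) {r ρ : ℝ} (hr : 0 ≤ r) (hρ : 0 ≤ ρ) (φ a t : ℝ) :
    HorizontalJoin m (cyl r φ t)
      (cyl r φ (t + ((r ^ 2) ^ m * r ^ 2 - (ρ ^ 2) ^ m * ρ ^ 2) * a))
      (2 * |ρ - r| + (ρ + r) * |a|) := by
  have h := (((horizontalJoin_radial m r ρ φ t).trans (horizontalJoin_arc m ρ φ a t)).trans
    (horizontalJoin_radial m ρ r (φ + a) _)).trans (horizontalJoin_arc m r (φ + a) (-a) _)
  convert h using 1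
  · rw [add_neg_cancel_right]
    congr 1
    ring
  · rw [abs_mul, abs_mul, abs_neg, abs_sub_comm r ρ, abs_of_nonneg hr, abs_of_nonneg hρ]
    ring

lemma sq_rpow_mul_sq {m x : ℝ} (hm : m ≠ -1) (hx : 0 ≤ x) :
    (x ^ 2) ^ m * x ^ 2 = x ^ (2 * m + 2) := by
  rw [← Real.rpow_natCast x 2, ← Real.rpow_mul hx, Real.rpow_natCast,
    ← Real.rpow_add_natCast' hx (by push_cast; contrapose! hm; linarith)]
  norm_num [mul_comm]

lemma sub_mul_rpow_le_rpow_add_one_sub {p s u : ℝ} (hp : 0 ≤ p) (hs : 0 ≤ s) (hsu : s ≤ u) :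
    (u - s) * u ^ p ≤ u ^ (p + 1) - s ^ (p + 1) := by
  rw [Real.rpow_add_one' (hs.trans hsu) (by linarith), Real.rpow_add_one' hs (by linarith)]
  nlinarith [Real.rpow_le_rpow hs hsu hp]

lemma ccDist_cyl_le_of_lt {m r s u : ℝ} (hm : 0 ≤ 2 * m + 1) (hs : 0 ≤ s) (hsu : s < u)
    (hr : r = s ∨ r = u) (φ t τ : ℝ) :
    ccDist m (cyl r φ t) (cyl r φ τ) ≤ 2 * (u - s) + 2 * |τ - t| / ((u - s) * u ^ (2 * m)) := by
  have hu : 0 < u := hs.trans_lt hsu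
  have hK {x : ℝ} (hx : 0 ≤ x) : (x ^ 2) ^ m * x ^ 2 = x ^ (2 * m + 2) :=
    sq_rpow_mul_sq (by contrapose! hm; linarith) hx
  have hgap : (u - s) * u ^ (2 * m) * u ≤ u ^ (2 * m + 2) - s ^ (2 * m + 2) := by
    have := sub_mul_rpow_le_rpow_add_one_sub hm hs hsu.le
    rwa [Real.rpow_add_one hu.ne', ← mul_assoc, show 2 * m + 1 + 1 = 2 * m + 2 by ring] at this
  have hpos : 0 < (u - s) * u ^ (2 * m) * u := by
    have := Real.rpow_pos_of_pos hu (2 * m)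
    have := sub_pos.2 hsu
    positivity
  obtain ⟨hr0, ρ, hρ, hρr, hρr', hKρ⟩ : 0 ≤ r ∧ ∃ ρ, 0 ≤ ρ ∧ |ρ - r| = u - s ∧ ρ + r = s + u ∧
      |(r ^ 2) ^ m * r ^ 2 - (ρ ^ 2) ^ m * ρ ^ 2| = u ^ (2 * m + 2) - s ^ (2 * m + 2) := by
    have hsu' : s ^ (2 * m + 2) ≤ u ^ (2 * m + 2) := by linarith
    rcases hr with rfl | rfl
    · refine ⟨hs, u, hu.le, ?_, by ring, ?_⟩
      · rw [abs_of_pos (sub_pos.2 hsu)]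
      · rw [hK hs, hK hu.le, abs_sub_comm, abs_of_nonneg (sub_nonneg.2 hsu')]
    · refine ⟨hu.le, s, hs, ?_, by ring, ?_⟩
      · rw [abs_sub_comm, abs_of_pos (sub_pos.2 hsu)]
      · rw [hK hs, hK hu.le, abs_of_nonneg (sub_nonneg.2 hsu')]
  have hKne : (r ^ 2) ^ m * r ^ 2 - (ρ ^ 2) ^ m * ρ ^ 2 ≠ 0 := by
    rw [← abs_pos, hKρ]; linarith
  set a := (τ - t) / ((r ^ 2) ^ m * r ^ 2 - (ρ ^ 2) ^ m * ρ ^ 2)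
  have hend : t + ((r ^ 2) ^ m * r ^ 2 - (ρ ^ 2) ^ m * ρ ^ 2) * a = τ := by
    rw [mul_div_cancel₀ _ hKne]; ring
  have h := (horizontalJoin_loop m hr0 hρ φ a t).ccDist_le
  rw [hend, hρr, hρr', abs_div, hKρ] at h
  refine h.trans (add_le_add_right ?_ _)
  calc (s + u) * (|τ - t| / (u ^ (2 * m + 2) - s ^ (2 * m + 2)))
      ≤ (2 * u) * (|τ - t| / ((u - s) * u ^ (2 * m) * u)) := by
        gcongr
        · exact div_nonneg (abs_nonneg _) (hpos.le.trans hgap)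
        · linarith
    _ = 2 * |τ - t| / ((u - s) * u ^ (2 * m)) := by field_simp

section Regimes

variable {m r h t τ : ℝ}

lemma ccDist_cyl_le_four_mul (hm : 0 ≤ m) (hr : 0 ≤ r) (hh : 0 < h)
    (hH : |τ - t| = h ^ (2 * m + 2)) (φ : ℝ) :
    ccDist m (cyl r φ t) (cyl r φ τ) ≤ 4 * h := by
  have hd := ccDist_cyl_le_of_lt (m := m) (s := r) (u := r + h) (by linarith) hr (by linarith)
    (Or.inl rfl) φ t τ
  rw [add_sub_cancel_left, hH] at hd
  have hmono : h ^ (2 * m) ≤ (r + h) ^ (2 * m) :=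
    Real.rpow_le_rpow hh.le (by linarith) (by linarith)
  have hsplit : h ^ (2 * m + 2) = h ^ (2 * m) * h * h := by
    rw [Real.rpow_add hh, mul_assoc, ← sq]; norm_num
  have hpos : 0 < h * (r + h) ^ (2 * m) := mul_pos hh (Real.rpow_pos_of_pos (by linarith) _)
  have hterm : 2 * h ^ (2 * m + 2) / (h * (r + h) ^ (2 * m)) ≤ 2 * h := by
    rw [div_le_iff₀ hpos, hsplit]
    have := mul_le_mul_of_nonneg_left hmono (by positivity : 0 ≤ 2 * h * h)
    nlinarith
  linarith

lemma ccDist_cyl_le_four_mul_div (hm : 0 ≤ m) (hh : 0 < h) (hhr : h ≤ r)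
    (hH : |τ - t| = h ^ (2 * m + 2)) (φ : ℝ) :
    ccDist m (cyl r φ t) (cyl r φ τ) ≤ 4 * (h ^ (m + 1) / r ^ m) := by
  have hr : 0 < r := hh.trans_le hhr
  have hrm : 0 < r ^ m := Real.rpow_pos_of_pos hr m
  set δ := h ^ (m + 1) / r ^ m with hδdef
  have hδ : 0 < δ := div_pos (Real.rpow_pos_of_pos hh _) hrm
  have hδr : δ ≤ r := by
    rw [div_le_iff₀ hrm, mul_comm, ← Real.rpow_add_one hr.ne']
    exact Real.rpow_le_rpow hh.le hhr (by linarith)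
  have hd := ccDist_cyl_le_of_lt (m := m) (s := r - δ) (u := r) (by linarith) (by linarith)
    (by linarith) (Or.inr rfl) φ t τ
  have hsq : h ^ (2 * m + 2) = (h ^ (m + 1)) ^ 2 := by
    rw [← Real.rpow_mul_natCast hh.le]; ring_nf
  have hsq' : r ^ (2 * m) = (r ^ m) ^ 2 := by
    rw [← Real.rpow_mul_natCast hr.le]; ring_nf
  have hterm : 2 * |τ - t| / ((r - (r - δ)) * r ^ (2 * m)) = 2 * δ := by
    rw [hH, hsq, hsq', sub_sub_cancel, hδdef]
    field_simp
  linarith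

end Regimes

lemma ccDist_cyl_le {m r h t τ : ℝ} (hm : 0 ≤ m) (hr : 0 ≤ r) (hh : 0 ≤ h)
    (hH : |τ - t| = h ^ (2 * m + 2)) (φ : ℝ) :
    ccDist m (cyl r φ t) (cyl r φ τ) ≤ 4 * h ∧
      (0 < r → ccDist m (cyl r φ t) (cyl r φ τ) ≤ 4 * min h (h ^ (m + 1) / r ^ m)) := by
  rcases hh.eq_or_lt with rfl | hh
  · have hτ : τ = t := by
      rw [Real.zero_rpow (by linarith), abs_eq_zero, sub_eq_zero] at hH; exact hH
    have hd : ccDist m (cyl r φ t) (cyl r φ τ) ≤ 0 := by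
      simpa [hτ] using (horizontalJoin_loop m hr hr φ 0 t).ccDist_le
    refine ⟨by simpa using hd, fun hr' => hd.trans ?_⟩
    rw [Real.zero_rpow (by linarith), zero_div, min_self, mul_zero]
  have hA := ccDist_cyl_le_four_mul hm hr hh hH φ
  refine ⟨hA, fun hr' => ?_⟩
  rw [mul_min_of_nonneg _ _ (by norm_num : (0 : ℝ) ≤ 4)]
  refine le_min hA ?_
  rcases le_total r h with hrh | hhr
  · refine hA.trans (mul_le_mul_of_nonneg_left ?_ (by norm_num))
    rw [le_div_iff₀ (Real.rpow_pos_of_pos hr' m), Real.rpow_add_one hh.ne', mul_comm]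
    exact mul_le_mul_of_nonneg_right (Real.rpow_le_rpow hr hrh hm) hh.le
  · exact ccDist_cyl_le_four_mul_div hm hh hhr hH φ

lemma cyl_nrm_arg (x y t : ℝ) : cyl (nrm (x, y)) (Complex.arg ⟨x, y⟩) t = (x, y, t) := by
  have hn : nrm (x, y) = ‖(⟨x, y⟩ : ℂ)‖ := by
    simp only [nrm, Complex.norm_def, Complex.normSq_mk, sq]
  simp only [cyl, hn, Complex.norm_mul_cos_arg, Complex.norm_mul_sin_arg]

lemma nrm_pos {x y : ℝ} (hxy : (x, y) ≠ (0, 0)) : 0 < nrm (x, y) := by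
  refine Real.sqrt_pos.2 ?_
  by_contra! h
  have hx : x = 0 := by nlinarith [sq_nonneg x, sq_nonneg y]
  have hy : y = 0 := by nlinarith [sq_nonneg x, sq_nonneg y]
  exact hxy (by rw [hx, hy])

/-- Estimate for the CC distance between points lying one above the other:
`d((z,t),(z,τ)) ≤ C min{ |τ−t|^(1/(2m+2)), |τ−t|^(1/2)/|z|^m }`
(the second term being `+∞` when `z = 0`). -/
theorem stmt4 (m : ℝ) (hm : 1 ≤ m) :
    ∃ C : ℝ, 0 < C ∧ ∀ x y t τ : ℝ,
      ccDist m (x, y, t) (x, y, τ) ≤ C * |τ - t| ^ (1 / (2 * m + 2)) ∧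
      ((x, y) ≠ ((0 : ℝ), (0 : ℝ)) →
        ccDist m (x, y, t) (x, y, τ) ≤
          C * min (|τ - t| ^ (1 / (2 * m + 2)))
            (|τ - t| ^ ((1 : ℝ) / 2) / nrm (x, y) ^ m)) := by
  refine ⟨4, by norm_num, fun x y t τ => ?_⟩
  have hH : |τ - t| = (|τ - t| ^ (1 / (2 * m + 2))) ^ (2 * m + 2) := by
    rw [one_div, Real.rpow_inv_rpow (abs_nonneg _) (by linarith)]
  have hhalf : |τ - t| ^ ((1 : ℝ) / 2) = (|τ - t| ^ (1 / (2 * m + 2))) ^ (m + 1) := by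
    rw [← Real.rpow_mul (abs_nonneg _)]
    congr 1
    field_simp
  obtain ⟨hd, hd'⟩ := ccDist_cyl_le (r := nrm (x, y)) (by linarith) (Real.sqrt_nonneg _)
    (by positivity) hH (Complex.arg ⟨x, y⟩)
  rw [cyl_nrm_arg, cyl_nrm_arg] at hd hd'
  exact ⟨hd, fun hxy => hhalf ▸ hd' (nrm_pos hxy)⟩
end
end

section
/- Let m ≥ 1 and d be the Carnot–Carathéodory distance of X = ∂_x + |z|^{2m} y ∂_t, Y = ∂_y − |z|^{2m} x ∂_t. There exists C₀ ≥ 1 such that for all (u,v) ∈ ℝ², all z ∈ ℝ² and t ∈ ℝ: |(u,v)| ≤ d( (z,t), e^{uX+vY}(z,t) ) ≤ C₀ |(u,v)|. -/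
open MeasureTheory Set

noncomputable section

/-- The point `e^{uX+vY}(x,y,t)`. -/
noncomputable def flowPt (m u v x y t : ℝ) : ℝ × ℝ × ℝ :=
  (x + u, y + v,
    t + (u * y - v * x) * ∫ s in (0 : ℝ)..1, w2m m (x + s * u, y + s * v))

/-!
A horizontal curve moves in the `z`-plane with velocity `(α, β)`, exactly its controls, so its
length is at least the Euclidean distance between the planar projections of its endpoints.
Conversely the flow line `s ↦ e^{s(uX+vY)}(z,t)` is horizontal with constant controls `(u, v)`,
hence has length `|(u,v)|` on `[0,1]`. Thus `d((z,t), e^{uX+vY}(z,t)) = |(u,v)|` and `C₀ = 1`.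
-/

lemma mul_add_mul_le_sqrt_sq_add_sq {a b : ℝ} (hab : a ^ 2 + b ^ 2 = 1) (p q : ℝ) :
    a * p + b * q ≤ √(p ^ 2 + q ^ 2) := by
  have hsq := Real.sq_sqrt (by positivity : (0 : ℝ) ≤ p ^ 2 + q ^ 2)
  nlinarith [Real.sqrt_nonneg (p ^ 2 + q ^ 2), sq_nonneg (a * q - b * p),
    sq_nonneg (√(p ^ 2 + q ^ 2) - (a * p + b * q))]

lemma sqrt_sq_add_sq_le_abs_add_abs (a b : ℝ) : √(a ^ 2 + b ^ 2) ≤ |a| + |b| := by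
  rw [Real.sqrt_le_left (by positivity)]
  nlinarith [sq_abs a, sq_abs b, abs_nonneg a, abs_nonneg b]

lemma IntervalIntegrable.sqrt_sq_add_sq {α β : ℝ → ℝ} {μ : Measure ℝ} {a b : ℝ}
    (hα : IntervalIntegrable α μ a b) (hβ : IntervalIntegrable β μ a b) :
    IntervalIntegrable (fun s => √(α s ^ 2 + β s ^ 2)) μ a b := by
  have hmeas : AEStronglyMeasurable (fun s => √(α s ^ 2 + β s ^ 2)) (μ.restrict (uIoc a b)) :=
    (Real.continuous_sqrt.comp ((continuous_fst.pow 2).add (continuous_snd.pow 2))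
      ).comp_aestronglyMeasurable (hα.def'.aestronglyMeasurable.prodMk hβ.def'.aestronglyMeasurable)
  refine (hα.abs.add hβ.abs).mono_fun hmeas (Filter.Eventually.of_forall fun s => ?_)
  simpa [Real.norm_of_nonneg (Real.sqrt_nonneg _),
    abs_of_nonneg (by positivity : 0 ≤ |α s| + |β s|)]
    using sqrt_sq_add_sq_le_abs_add_abs (α s) (β s)

lemma sqrt_sq_integral_add_sq_integral_le {α β : ℝ → ℝ} {μ : Measure ℝ} {a b : ℝ} (hab : a ≤ b)
    (hα : IntervalIntegrable α μ a b) (hβ : IntervalIntegrable β μ a b) :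
    √((∫ s in a..b, α s ∂μ) ^ 2 + (∫ s in a..b, β s ∂μ) ^ 2) ≤
      ∫ s in a..b, √(α s ^ 2 + β s ^ 2) ∂μ := by
  set A := ∫ s in a..b, α s ∂μ
  set B := ∫ s in a..b, β s ∂μ
  rcases (Real.sqrt_nonneg (A ^ 2 + B ^ 2)).eq_or_lt with hn | hn
  · rw [← hn]
    exact intervalIntegral.integral_nonneg hab fun s _ => Real.sqrt_nonneg _
  have hn2 : √(A ^ 2 + B ^ 2) ^ 2 = A ^ 2 + B ^ 2 := Real.sq_sqrt (by positivity)
  generalize √(A ^ 2 + B ^ 2) = n at hn hn2 ⊢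
  -- test against the unit vector in the direction of `(A, B)`
  have hunit : (A / n) ^ 2 + (B / n) ^ 2 = 1 := by
    rw [div_pow, div_pow, ← add_div, ← hn2, div_self (by positivity)]
  have hcomb : ∫ s in a..b, (A / n * α s + B / n * β s) ∂μ = n := by
    rw [intervalIntegral.integral_add (hα.const_mul _) (hβ.const_mul _),
      intervalIntegral.integral_const_mul, intervalIntegral.integral_const_mul]
    change A / n * A + B / n * B = n
    field_simp [hn.ne']
    linarith
  rw [← hcomb]
  exact intervalIntegral.integral_mono_on hab ((hα.const_mul _).add (hβ.const_mul _))
    (hα.sqrt_sq_add_sq hβ) fun s _ => mul_add_mul_le_sqrt_sq_add_sq hunit (α s) (β s)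

section Horizontal

variable {m : ℝ}

lemma ccLength_nonneg (α β : ℝ → ℝ) {T : ℝ} (hT : 0 ≤ T) : 0 ≤ ccLength α β T :=
  intervalIntegral.integral_nonneg hT fun _ _ => Real.sqrt_nonneg _

lemma ccLength_const (u v T : ℝ) : ccLength (fun _ => u) (fun _ => v) T = T * √(u ^ 2 + v ^ 2) := by
  simp [ccLength]

lemma IsHorizontal.sqrt_sq_sub_add_sq_sub_le_ccLength {γ : ℝ → ℝ × ℝ × ℝ} {α β : ℝ → ℝ} {T : ℝ}
    (hγ : IsHorizontal m γ α β T) (hT : 0 ≤ T) :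
    √(((γ T).1 - (γ 0).1) ^ 2 + ((γ T).2.1 - (γ 0).2.1) ^ 2) ≤ ccLength α β T := by
  set F : ℝ → ℝ × ℝ × ℝ := fun s => α s • Xvf m (γ s) + β s • Yvf m (γ s)
  have hγT : γ T = γ 0 + ∫ s in 0..T, F s := hγ T ⟨hT, le_rfl⟩
  by_cases hF : IntervalIntegrable F volume 0 T
  · have hα : IntervalIntegrable α volume 0 T := by
      simpa [F, Xvf, Yvf] using intervalIntegrable_iff.2 (intervalIntegrable_iff.1 hF).fst
    have hβ : IntervalIntegrable β volume 0 T := by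
      simpa [F, Xvf, Yvf] using intervalIntegrable_iff.2 (intervalIntegrable_iff.1 hF).snd.fst
    have hA : (γ T).1 - (γ 0).1 = ∫ s in 0..T, α s := by
      simpa [hγT, F, Xvf, Yvf] using
        ((ContinuousLinearMap.fst ℝ ℝ (ℝ × ℝ)).intervalIntegral_comp_comm hF).symm
    have hB : (γ T).2.1 - (γ 0).2.1 = ∫ s in 0..T, β s := by
      simpa [hγT, F, Xvf, Yvf] using (((ContinuousLinearMap.fst ℝ ℝ ℝ).comp
        (ContinuousLinearMap.snd ℝ ℝ (ℝ × ℝ))).intervalIntegral_comp_comm hF).symm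
    rw [hA, hB]
    exact sqrt_sq_integral_add_sq_integral_le hT hα hβ
  · -- the junk value `0` of a non-integrable integral makes the curve closed
    rw [intervalIntegral.integral_undef hF, add_zero] at hγT
    simpa [hγT] using ccLength_nonneg α β hT

lemma ccDist_le_ccLength {p q : ℝ × ℝ × ℝ} {γ : ℝ → ℝ × ℝ × ℝ} {α β : ℝ → ℝ} {T : ℝ}
    (hγ : IsHorizontal m γ α β T) (hT : 0 ≤ T) (h0 : γ 0 = p) (h1 : γ T = q) :
    ccDist m p q ≤ ccLength α β T := by
  refine csInf_le ⟨0, ?_⟩ ⟨T, hT, γ, α, β, hγ, h0, h1, rfl⟩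
  rintro L ⟨T', hT', -, α', β', -, -, -, rfl⟩
  exact ccLength_nonneg α' β' hT'

lemma sqrt_sq_sub_add_sq_sub_le_ccDist {p q : ℝ × ℝ × ℝ} {γ : ℝ → ℝ × ℝ × ℝ} {α β : ℝ → ℝ}
    {T : ℝ} (hγ : IsHorizontal m γ α β T) (hT : 0 ≤ T) (h0 : γ 0 = p) (h1 : γ T = q) :
    √((q.1 - p.1) ^ 2 + (q.2.1 - p.2.1) ^ 2) ≤ ccDist m p q := by
  refine le_csInf ⟨_, T, hT, γ, α, β, hγ, h0, h1, rfl⟩ ?_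
  rintro L ⟨T', hT', γ', α', β', hγ', rfl, rfl, rfl⟩
  exact hγ'.sqrt_sq_sub_add_sq_sub_le_ccLength hT'

end Horizontal

section FlowLine

variable {m : ℝ}

lemma continuous_w2m (hm : 0 ≤ m) : Continuous (w2m m) :=
  ((continuous_fst.pow 2).add (continuous_snd.pow 2)).rpow_const fun _ => Or.inr hm

lemma continuous_w2m_line (hm : 0 ≤ m) (u v x y : ℝ) :
    Continuous fun r : ℝ => w2m m (x + r * u, y + r * v) :=
  (continuous_w2m hm).comp (by fun_prop)

/-- The integral curve `s ↦ e^{s(uX+vY)}(x,y,t)`. -/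
def flowCurve (m u v x y t s : ℝ) : ℝ × ℝ × ℝ :=
  (x + s * u, y + s * v, t + (u * y - v * x) * ∫ r in 0..s, w2m m (x + r * u, y + r * v))

@[simp]
lemma flowCurve_zero (u v x y t : ℝ) : flowCurve m u v x y t 0 = (x, y, t) := by
  simp [flowCurve]

@[simp]
lemma flowCurve_one (u v x y t : ℝ) : flowCurve m u v x y t 1 = flowPt m u v x y t := by
  simp [flowCurve, flowPt]

lemma smul_Xvf_add_smul_Yvf_flowCurve (u v x y t s : ℝ) :
    u • Xvf m (flowCurve m u v x y t s) + v • Yvf m (flowCurve m u v x y t s) =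
      (u, v, (u * y - v * x) * w2m m (x + s * u, y + s * v)) := by
  simp only [flowCurve, Xvf, Yvf, Prod.smul_mk, smul_eq_mul, Prod.mk_add_mk, Prod.mk.injEq]
  refine ⟨by ring, by ring, by ring⟩

lemma hasDerivAt_flowCurve (hm : 0 ≤ m) (u v x y t s : ℝ) :
    HasDerivAt (flowCurve m u v x y t)
      (u • Xvf m (flowCurve m u v x y t s) + v • Yvf m (flowCurve m u v x y t s)) s := by
  rw [smul_Xvf_add_smul_Yvf_flowCurve]
  refine (((hasDerivAt_id s).mul_const u).const_add x |>.congr_deriv (one_mul u)).prodMk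
    ((((hasDerivAt_id s).mul_const v).const_add y |>.congr_deriv (one_mul v)).prodMk ?_)
  exact (((continuous_w2m_line hm u v x y).integral_hasStrictDerivAt 0 s).hasDerivAt.const_mul _
    ).const_add t

lemma isHorizontal_flowCurve (hm : 0 ≤ m) (u v x y t T : ℝ) :
    IsHorizontal m (flowCurve m u v x y t) (fun _ => u) (fun _ => v) T := by
  intro s _
  have hcont : Continuous fun r =>
      u • Xvf m (flowCurve m u v x y t r) + v • Yvf m (flowCurve m u v x y t r) := by
    simp only [smul_Xvf_add_smul_Yvf_flowCurve]
    exact continuous_const.prodMk (continuous_const.prodMk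
      (continuous_const.mul (continuous_w2m_line hm u v x y)))
  rw [intervalIntegral.integral_eq_sub_of_hasDerivAt
    (fun r _ => hasDerivAt_flowCurve hm u v x y t r) (hcont.intervalIntegrable 0 s)]
  abel

lemma ccDist_flowPt (hm : 0 ≤ m) (u v x y t : ℝ) :
    ccDist m (x, y, t) (flowPt m u v x y t) = √(u ^ 2 + v ^ 2) := by
  have hγ := isHorizontal_flowCurve hm u v x y t 1
  refine le_antisymm ?_ ?_
  · simpa [ccLength_const] using
      ccDist_le_ccLength hγ zero_le_one (flowCurve_zero u v x y t) (flowCurve_one u v x y t)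
  · simpa [flowPt] using
      sqrt_sq_sub_add_sq_sub_le_ccDist hγ zero_le_one (flowCurve_zero u v x y t)
        (flowCurve_one u v x y t)

end FlowLine

/-- Global equivalence `|(u,v)| ≤ d((z,t), e^{uX+vY}(z,t)) ≤ C₀ |(u,v)|`. -/
theorem stmt9 (m : ℝ) (hm : 1 ≤ m) :
    ∃ C₀ : ℝ, 1 ≤ C₀ ∧ ∀ u v x y t : ℝ,
      Real.sqrt (u ^ 2 + v ^ 2) ≤ ccDist m (x, y, t) (flowPt m u v x y t) ∧
      ccDist m (x, y, t) (flowPt m u v x y t) ≤ C₀ * Real.sqrt (u ^ 2 + v ^ 2) := by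
  refine ⟨1, le_rfl, fun u v x y t => ?_⟩
  rw [ccDist_flowPt (zero_le_one.trans hm), one_mul]
  exact ⟨le_rfl, le_rfl⟩
end
end

section
/- Let m ≥ 1 and let φ ∈ C^∞(ℝ²) be m-admissible. Then the function z ↦ |ZF(z)|/|z|^{2m} (defined as 0 at z = 0), where ZF(z) = (φ_x(z) − |z|^{2m} y, φ_y(z) + |z|^{2m} x), is globally Lipschitz continuous on ℝ². -/
set_option maxHeartbeats 1000000

open MeasureTheory Set

noncomputable section

/-- `φ` is `m`-admissible with constant `C`:
`|D³φ(z)| ≤ C|z|^(2m−1)`, `|D²φ(z)| ≤ C|z|^(2m)`, `|Dφ(z)| ≤ C|z|^(2m+1)`. -/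
def Admissible (m C : ℝ) (φ : ℝ × ℝ → ℝ) : Prop :=
  ContDiff ℝ (⊤ : ℕ∞) φ ∧
  (∀ z, ‖iteratedFDeriv ℝ 1 φ z‖ ≤ C * nrm z ^ (2 * m + 1)) ∧
  (∀ z, ‖iteratedFDeriv ℝ 2 φ z‖ ≤ C * nrm z ^ (2 * m)) ∧
  (∀ z, ‖iteratedFDeriv ℝ 3 φ z‖ ≤ C * nrm z ^ (2 * m - 1))

/-- `φ_x`. -/
def phx (φ : ℝ × ℝ → ℝ) (z : ℝ × ℝ) : ℝ := fderiv ℝ φ z (1, 0)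

/-- `φ_y`. -/
def phy (φ : ℝ × ℝ → ℝ) (z : ℝ × ℝ) : ℝ := fderiv ℝ φ z (0, 1)

/-- `XF(z) = φ_x(z) − |z|^(2m) y` for `F(z,t) = φ(z) − t`. -/
def ZFx (m : ℝ) (φ : ℝ × ℝ → ℝ) (z : ℝ × ℝ) : ℝ := phx φ z - w2m m z * z.2

/-- `YF(z) = φ_y(z) + |z|^(2m) x` for `F(z,t) = φ(z) − t`. -/
def ZFy (m : ℝ) (φ : ℝ × ℝ → ℝ) (z : ℝ × ℝ) : ℝ := phy φ z + w2m m z * z.1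

/-- `|ZF(z)|`. -/
def ZFnorm (m : ℝ) (φ : ℝ × ℝ → ℝ) (z : ℝ × ℝ) : ℝ :=
  Real.sqrt (ZFx m φ z ^ 2 + ZFy m φ z ^ 2)

/-! ### Auxiliary lemmas -/

lemma sqrt_pair (x y : ℝ) : Real.sqrt (x ^ 2 + y ^ 2) = ‖(⟨x, y⟩ : ℂ)‖ := by
  rw [Complex.norm_def, Complex.normSq_mk]; ring_nf

lemma sqrt_diff_le (a b c d : ℝ) :
    |Real.sqrt (a ^ 2 + b ^ 2) - Real.sqrt (c ^ 2 + d ^ 2)| ≤ |a - c| + |b - d| := by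
  rw [sqrt_pair, sqrt_pair]
  have h1 : |‖(⟨a, b⟩ : ℂ)‖ - ‖(⟨c, d⟩ : ℂ)‖| ≤ ‖(⟨a, b⟩ - ⟨c, d⟩ : ℂ)‖ :=
    abs_norm_sub_norm_le _ _
  have h2 : (⟨a, b⟩ - ⟨c, d⟩ : ℂ) = ⟨a - c, b - d⟩ := by
    apply Complex.ext <;> simp
  rw [h2] at h1
  refine h1.trans ?_
  rw [← sqrt_pair]
  have h3 : (a - c) ^ 2 + (b - d) ^ 2 ≤ (|a - c| + |b - d|) ^ 2 := by
    nlinarith [sq_abs (a - c), sq_abs (b - d),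
      mul_nonneg (abs_nonneg (a - c)) (abs_nonneg (b - d))]
  calc Real.sqrt ((a - c) ^ 2 + (b - d) ^ 2) ≤ Real.sqrt ((|a - c| + |b - d|) ^ 2) :=
        Real.sqrt_le_sqrt h3
    _ = |a - c| + |b - d| := Real.sqrt_sq (by positivity)

lemma nrm_nonneg (z : ℝ × ℝ) : 0 ≤ nrm z := Real.sqrt_nonneg _

lemma nrm_pos_s13 {z : ℝ × ℝ} (hz : z ≠ 0) : 0 < nrm z := by
  apply Real.sqrt_pos.2
  have : z.1 ≠ 0 ∨ z.2 ≠ 0 := by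
    by_contra h
    push_neg at h
    exact hz (Prod.ext h.1 h.2)
  rcases this with h | h
  · nlinarith [sq_nonneg z.2, pow_pos (abs_pos.2 h) 2, sq_abs z.1]
  · nlinarith [sq_nonneg z.1, pow_pos (abs_pos.2 h) 2, sq_abs z.2]

lemma sq_nrm (z : ℝ × ℝ) : nrm z ^ 2 = z.1 ^ 2 + z.2 ^ 2 :=
  Real.sq_sqrt (by positivity)

lemma abs_fst_le_nrm (z : ℝ × ℝ) : |z.1| ≤ nrm z := by
  rw [← Real.sqrt_sq_eq_abs]
  exact Real.sqrt_le_sqrt (by nlinarith [sq_nonneg z.2])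

lemma abs_snd_le_nrm (z : ℝ × ℝ) : |z.2| ≤ nrm z := by
  rw [← Real.sqrt_sq_eq_abs]
  exact Real.sqrt_le_sqrt (by nlinarith [sq_nonneg z.1])

lemma norm_le_nrm (z : ℝ × ℝ) : ‖z‖ ≤ nrm z := by
  rw [Prod.norm_def]
  exact max_le (by simpa [Real.norm_eq_abs] using abs_fst_le_nrm z)
    (by simpa [Real.norm_eq_abs] using abs_snd_le_nrm z)

lemma nrm_le_two_norm (z : ℝ × ℝ) : nrm z ≤ 2 * ‖z‖ := by
  have h1 : |z.1| ≤ ‖z‖ := by simpa [Real.norm_eq_abs] using norm_fst_le z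
  have h2 : |z.2| ≤ ‖z‖ := by simpa [Real.norm_eq_abs] using norm_snd_le z
  have h3 : z.1 ^ 2 + z.2 ^ 2 ≤ (2 * ‖z‖) ^ 2 := by
    nlinarith [sq_abs z.1, sq_abs z.2, abs_nonneg z.1, abs_nonneg z.2, norm_nonneg z,
      mul_self_le_mul_self (abs_nonneg z.1) h1, mul_self_le_mul_self (abs_nonneg z.2) h2]
  calc nrm z ≤ Real.sqrt ((2 * ‖z‖) ^ 2) := Real.sqrt_le_sqrt h3
    _ = 2 * ‖z‖ := Real.sqrt_sq (by positivity)

lemma rpow_of_sq {r : ℝ} (hr : 0 ≤ r) (e : ℝ) : (r ^ 2) ^ e = r ^ (2 * e) := by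
  rw [← Real.rpow_natCast r 2, ← Real.rpow_mul hr]
  norm_num

/-- A function on ℝ² that vanishes linearly at the origin and has a derivative of norm at
most `K` away from the origin is `K`-Lipschitz. -/
lemma lipKey (K : NNReal) (g : ℝ × ℝ → ℝ)
    (hbd : ∀ z : ℝ × ℝ, |g z| ≤ K * ‖z‖)
    (hd : ∀ z : ℝ × ℝ, z ≠ 0 → ∃ g' : (ℝ × ℝ) →L[ℝ] ℝ,
      HasFDerivAt g g' z ∧ ‖g'‖ ≤ K) :
    LipschitzWith K g := by
  apply LipschitzWith.of_dist_le_mul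
  intro z w
  rw [Real.dist_eq, dist_eq_norm]
  by_cases hseg : (0 : ℝ × ℝ) ∈ segment ℝ z w
  · obtain ⟨a, b, ha, hb, hab, habz⟩ := hseg
    have h1 : b • (z - w) = z := by
      have e : b • (z - w) = (a + b) • z - (a • z + b • w) := by
        rw [add_smul, smul_sub]; abel
      rw [e, hab, habz, one_smul, sub_zero]
    have h2 : a • (z - w) = -w := by
      have e : a • (z - w) = (a • z + b • w) - (a + b) • w := by
        rw [add_smul, smul_sub]; abel
      rw [e, hab, habz, one_smul, zero_sub]
    have hz1 : ‖z‖ = b * ‖z - w‖ := by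
      conv_lhs => rw [← h1]
      rw [norm_smul, Real.norm_eq_abs, abs_of_nonneg hb]
    have hw1 : ‖w‖ = a * ‖z - w‖ := by
      conv_lhs => rw [← norm_neg w, ← h2]
      rw [norm_smul, Real.norm_eq_abs, abs_of_nonneg ha]
    have hsum : ‖z‖ + ‖w‖ = ‖z - w‖ := by
      rw [hz1, hw1, ← add_mul, add_comm b a, hab, one_mul]
    calc |g z - g w| ≤ |g z| + |g w| := abs_sub _ _
      _ ≤ K * ‖z‖ + K * ‖w‖ := add_le_add (hbd z) (hbd w)
      _ = K * (‖z‖ + ‖w‖) := by ring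
      _ = K * ‖z - w‖ := by rw [hsum]
  · have hne : ∀ x ∈ segment ℝ z w, x ≠ (0 : ℝ × ℝ) := by
      intro x hx h0; exact hseg (h0 ▸ hx)
    set F : ℝ × ℝ → (ℝ × ℝ) →L[ℝ] ℝ := fun x =>
      if hx : x = (0 : ℝ × ℝ) then 0 else (hd x hx).choose with hF
    have hder : ∀ x ∈ segment ℝ z w, HasFDerivWithinAt g (F x) (segment ℝ z w) x := by
      intro x hx
      have hx0 := hne x hx
      rw [hF]; simp only [dif_neg hx0]
      exact (hd x hx0).choose_spec.1.hasFDerivWithinAt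
    have hbound : ∀ x ∈ segment ℝ z w, ‖F x‖ ≤ (K : ℝ) := by
      intro x hx
      have hx0 := hne x hx
      rw [hF]; simp only [dif_neg hx0]
      exact (hd x hx0).choose_spec.2
    exact (convex_segment z w).norm_image_sub_le_of_norm_hasFDerivWithin_le
      hder hbound (right_mem_segment ℝ z w) (left_mem_segment ℝ z w)

/-- The key quotient estimate: `z ↦ (Dφ(z) v)/|z|^(2m)` (with value `0` at the origin) is
Lipschitz, for any fixed unit vector `v`. -/
lemma quot_lip (m C : ℝ) (hm : 1 ≤ m) (hC : 0 < C) (φ : ℝ × ℝ → ℝ)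
    (hφ : ContDiff ℝ (⊤ : ℕ∞) φ)
    (h1 : ∀ z, ‖fderiv ℝ φ z‖ ≤ C * nrm z ^ (2 * m + 1))
    (h2 : ∀ z, ‖fderiv ℝ (fderiv ℝ φ) z‖ ≤ C * nrm z ^ (2 * m))
    (v : ℝ × ℝ) (hv : ‖v‖ ≤ 1) :
    LipschitzWith (C * (4 * m + 2)).toNNReal
      (fun z : ℝ × ℝ => if z = 0 then 0 else fderiv ℝ φ z v / w2m m z) := by
  have hKpos : (0 : ℝ) ≤ C * (4 * m + 2) := by nlinarith
  have hK : ((C * (4 * m + 2)).toNNReal : ℝ) = C * (4 * m + 2) :=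
    Real.coe_toNNReal _ hKpos
  apply lipKey
  · -- value bound
    intro z
    by_cases hz : z = 0
    · simp [hz]
    · rw [if_neg hz]
      set r := nrm z with hrdef
      have hr : 0 < r := nrm_pos_s13 hz
      have hq0 : (0 : ℝ) < z.1 ^ 2 + z.2 ^ 2 := by rw [← sq_nrm z]; positivity
      have hw : w2m m z = r ^ (2 * m) := by
        rw [w2m, ← sq_nrm z]; exact rpow_of_sq (nrm_nonneg z) m
      have hwpos : 0 < w2m m z := by rw [hw]; exact Real.rpow_pos_of_pos hr _
      have hnum : |fderiv ℝ φ z v| ≤ C * (r ^ (2 * m) * r) := by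
        calc |fderiv ℝ φ z v| = ‖fderiv ℝ φ z v‖ := (Real.norm_eq_abs _).symm
          _ ≤ ‖fderiv ℝ φ z‖ * ‖v‖ := (fderiv ℝ φ z).le_opNorm v
          _ ≤ C * r ^ (2 * m + 1) * 1 :=
            mul_le_mul (h1 z) hv (norm_nonneg v)
              (by positivity)
          _ = C * (r ^ (2 * m) * r) := by
            rw [mul_one, Real.rpow_add hr, Real.rpow_one]
      have hpow : (0 : ℝ) < r ^ (2 * m) := Real.rpow_pos_of_pos hr _
      rw [abs_div, abs_of_pos hwpos, hw]
      calc |fderiv ℝ φ z v| / r ^ (2 * m)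
          ≤ (C * (r ^ (2 * m) * r)) / r ^ (2 * m) := by gcongr
        _ = C * r := by field_simp
        _ ≤ C * (2 * ‖z‖) := by
            exact mul_le_mul_of_nonneg_left (nrm_le_two_norm z) hC.le
        _ ≤ (C * (4 * m + 2)).toNNReal * ‖z‖ := by
            rw [hK]
            nlinarith [norm_nonneg z, mul_nonneg (mul_nonneg hC.le
              (by linarith : (0:ℝ) ≤ 4 * m)) (norm_nonneg z)]
  · -- derivative bound
    intro z hz
    set r := nrm z with hrdef
    have hr : 0 < r := nrm_pos_s13 hz
    have hq0 : (0 : ℝ) < z.1 ^ 2 + z.2 ^ 2 := by rw [← sq_nrm z]; positivity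
    have hq0r : z.1 ^ 2 + z.2 ^ 2 = r ^ 2 := (sq_nrm z).symm
    have hdd : ContDiff ℝ (⊤ : ℕ∞) (fderiv ℝ φ) := hφ.fderiv_right (by simp)
    have hf2 : HasFDerivAt (fderiv ℝ φ) (fderiv ℝ (fderiv ℝ φ) z) z :=
      ((hdd.differentiable (by simp)) z).hasFDerivAt
    set D1 : (ℝ × ℝ) →L[ℝ] ℝ :=
      (ContinuousLinearMap.apply ℝ ℝ v).comp (fderiv ℝ (fderiv ℝ φ) z) with hD1def
    have hnumd : HasFDerivAt (fun w => fderiv ℝ φ w v) D1 z := by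
      have := (ContinuousLinearMap.apply ℝ ℝ v).hasFDerivAt.comp z hf2
      exact this
    set Lq : (ℝ × ℝ) →L[ℝ] ℝ :=
      (z.1 • ContinuousLinearMap.fst ℝ ℝ ℝ + z.1 • ContinuousLinearMap.fst ℝ ℝ ℝ) +
      (z.2 • ContinuousLinearMap.snd ℝ ℝ ℝ + z.2 • ContinuousLinearMap.snd ℝ ℝ ℝ) with hLqdef
    have hq0d : HasFDerivAt (fun w : ℝ × ℝ => w.1 ^ 2 + w.2 ^ 2) Lq z := by
      have h := ((hasFDerivAt_fst (𝕜 := ℝ) (p := z)).mul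
        (hasFDerivAt_fst (𝕜 := ℝ) (p := z))).add
        ((hasFDerivAt_snd (𝕜 := ℝ) (p := z)).mul (hasFDerivAt_snd (𝕜 := ℝ) (p := z)))
      have e : (fun w : ℝ × ℝ => w.1 ^ 2 + w.2 ^ 2) = Prod.fst * Prod.fst + Prod.snd * Prod.snd := by
        funext w; simp [pow_two]
      rw [e]; exact h
    set q' : (ℝ × ℝ) →L[ℝ] ℝ := ((-m) * (z.1 ^ 2 + z.2 ^ 2) ^ (-m - 1)) • Lq with hq'def
    have hqd : HasFDerivAt (fun w : ℝ × ℝ => (w.1 ^ 2 + w.2 ^ 2) ^ (-m)) q' z := by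
      have h' := HasFDerivAt.rpow_const (p := -m) hq0d (Or.inl hq0.ne')
      exact h'
    set D : (ℝ × ℝ) →L[ℝ] ℝ :=
      (fderiv ℝ φ z v) • q' + ((z.1 ^ 2 + z.2 ^ 2) ^ (-m : ℝ)) • D1 with hDdef
    have hDg : HasFDerivAt
        (fun w => fderiv ℝ φ w v * (w.1 ^ 2 + w.2 ^ 2) ^ (-m : ℝ)) D z := hnumd.mul hqd
    have heq : (fun w : ℝ × ℝ => if w = 0 then 0 else fderiv ℝ φ w v / w2m m w)
        =ᶠ[nhds z] (fun w => fderiv ℝ φ w v * (w.1 ^ 2 + w.2 ^ 2) ^ (-m : ℝ)) := by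
      filter_upwards [IsOpen.mem_nhds isOpen_compl_singleton hz] with w hw
      have hw0 : w ≠ 0 := hw
      have hq0w : (0 : ℝ) ≤ w.1 ^ 2 + w.2 ^ 2 := by positivity
      rw [if_neg hw0, w2m, Real.rpow_neg hq0w, div_eq_mul_inv]
    refine ⟨D, hDg.congr_of_eventuallyEq heq, ?_⟩
    -- now the norm bound
    rw [hK]
    have hnum : |fderiv ℝ φ z v| ≤ C * r ^ (2 * m + 1) := by
      calc |fderiv ℝ φ z v| = ‖fderiv ℝ φ z v‖ := (Real.norm_eq_abs _).symm
        _ ≤ ‖fderiv ℝ φ z‖ * ‖v‖ := (fderiv ℝ φ z).le_opNorm v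
        _ ≤ C * r ^ (2 * m + 1) * 1 :=
          mul_le_mul (h1 z) hv (norm_nonneg v)
            (mul_nonneg hC.le (Real.rpow_nonneg (nrm_nonneg z) _))
        _ = C * r ^ (2 * m + 1) := mul_one _
    have hLq_bd : ‖Lq‖ ≤ 4 * r := by
      have e1 : ‖z.1 • ContinuousLinearMap.fst ℝ ℝ ℝ‖ ≤ r := by
        refine (ContinuousLinearMap.opNorm_smul_le _ _).trans ?_
        rw [Real.norm_eq_abs]
        calc |z.1| * ‖ContinuousLinearMap.fst ℝ ℝ ℝ‖ ≤ |z.1| * 1 :=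
              mul_le_mul_of_nonneg_left (ContinuousLinearMap.norm_fst_le _ _ _) (abs_nonneg _)
          _ = |z.1| := mul_one _
          _ ≤ r := abs_fst_le_nrm z
      have e2 : ‖z.2 • ContinuousLinearMap.snd ℝ ℝ ℝ‖ ≤ r := by
        refine (ContinuousLinearMap.opNorm_smul_le _ _).trans ?_
        rw [Real.norm_eq_abs]
        calc |z.2| * ‖ContinuousLinearMap.snd ℝ ℝ ℝ‖ ≤ |z.2| * 1 :=
              mul_le_mul_of_nonneg_left (ContinuousLinearMap.norm_snd_le _ _ _) (abs_nonneg _)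
          _ = |z.2| := mul_one _
          _ ≤ r := abs_snd_le_nrm z
      calc ‖Lq‖ ≤ ‖z.1 • ContinuousLinearMap.fst ℝ ℝ ℝ + z.1 • ContinuousLinearMap.fst ℝ ℝ ℝ‖ +
            ‖z.2 • ContinuousLinearMap.snd ℝ ℝ ℝ + z.2 • ContinuousLinearMap.snd ℝ ℝ ℝ‖ :=
            norm_add_le _ _
        _ ≤ (r + r) + (r + r) := by
            gcongr <;> [exact (norm_add_le _ _).trans (add_le_add e1 e1);
              exact (norm_add_le _ _).trans (add_le_add e2 e2)]
        _ = 4 * r := by ring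
    have hexp1 : (z.1 ^ 2 + z.2 ^ 2) ^ (-m - 1 : ℝ) = r ^ (2 * (-m - 1)) := by
      rw [hq0r]; exact rpow_of_sq hr.le _
    have hexp2 : (z.1 ^ 2 + z.2 ^ 2) ^ (-m : ℝ) = r ^ (2 * (-m)) := by
      rw [hq0r]; exact rpow_of_sq hr.le _
    have hq'_bd : ‖q'‖ ≤ m * r ^ (2 * (-m - 1)) * (4 * r) := by
      rw [hq'def]
      refine (ContinuousLinearMap.opNorm_smul_le _ _).trans ?_
      rw [Real.norm_eq_abs, abs_mul, abs_neg,
        abs_of_nonneg (by linarith : (0:ℝ) ≤ m),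
        abs_of_pos (Real.rpow_pos_of_pos hq0 _), hexp1]
      exact mul_le_mul_of_nonneg_left hLq_bd
        (mul_nonneg (by linarith) (Real.rpow_nonneg (nrm_nonneg z) _))
    have happ : ‖ContinuousLinearMap.apply ℝ ℝ v‖ ≤ ‖v‖ := by
      apply ContinuousLinearMap.opNorm_le_bound _ (norm_nonneg v)
      intro L
      rw [ContinuousLinearMap.apply_apply]
      exact (L.le_opNorm v).trans_eq (mul_comm _ _)
    have hD1_bd : ‖D1‖ ≤ C * r ^ (2 * m) := by
      calc ‖D1‖ ≤ ‖ContinuousLinearMap.apply ℝ ℝ v‖ * ‖fderiv ℝ (fderiv ℝ φ) z‖ :=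
            ContinuousLinearMap.opNorm_comp_le _ _
        _ ≤ 1 * (C * r ^ (2 * m)) :=
            mul_le_mul (happ.trans hv) (h2 z) (norm_nonneg (fderiv ℝ (fderiv ℝ φ) z)) zero_le_one
        _ = C * r ^ (2 * m) := one_mul _
    have key1 : r ^ (2 * m + 1) * (r ^ (2 * (-m - 1)) * r) = 1 := by
      nth_rewrite 3 [← Real.rpow_one r]
      rw [← Real.rpow_add hr, ← Real.rpow_add hr,
        show 2 * m + 1 + (2 * (-m - 1) + 1) = 0 by ring, Real.rpow_zero]
    have key2 : r ^ (2 * (-m)) * r ^ (2 * m) = 1 := by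
      rw [← Real.rpow_add hr, show 2 * (-m) + 2 * m = 0 by ring, Real.rpow_zero]
    calc ‖D‖ ≤ ‖(fderiv ℝ φ z v) • q'‖ + ‖((z.1 ^ 2 + z.2 ^ 2) ^ (-m : ℝ)) • D1‖ :=
          norm_add_le _ _
      _ ≤ |fderiv ℝ φ z v| * ‖q'‖ + |(z.1 ^ 2 + z.2 ^ 2) ^ (-m : ℝ)| * ‖D1‖ := by
          refine add_le_add ?_ ?_ <;>
            · refine (ContinuousLinearMap.opNorm_smul_le _ _).trans ?_
              rw [Real.norm_eq_abs]
      _ ≤ (C * r ^ (2 * m + 1)) * (m * r ^ (2 * (-m - 1)) * (4 * r)) +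
          (r ^ (2 * (-m))) * (C * r ^ (2 * m)) := by
          apply add_le_add
          · exact mul_le_mul hnum hq'_bd (norm_nonneg _)
              (mul_nonneg hC.le (Real.rpow_nonneg (nrm_nonneg z) _))
          · rw [abs_of_pos (Real.rpow_pos_of_pos hq0 _), hexp2]
            exact mul_le_mul_of_nonneg_left hD1_bd (Real.rpow_nonneg (nrm_nonneg z) _)
      _ = 4 * C * m * (r ^ (2 * m + 1) * (r ^ (2 * (-m - 1)) * r)) +
          C * (r ^ (2 * (-m)) * r ^ (2 * m)) := by ring
      _ = 4 * C * m + C := by rw [key1, key2]; ring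
      _ ≤ C * (4 * m + 2) := by nlinarith

/-- For an `m`-admissible function, `z ↦ |ZF(z)|/|z|^(2m)` (set to `0` at `z = 0`)
is globally Lipschitz on ℝ². -/
theorem stmt13 (m C : ℝ) (hm : 1 ≤ m) (hC : 0 < C) :
    ∃ L : NNReal, ∀ φ : ℝ × ℝ → ℝ, Admissible m C φ →
      LipschitzWith L
        (fun z : ℝ × ℝ => if z = 0 then 0 else ZFnorm m φ z / nrm z ^ (2 * m)) := by
  set K : NNReal := (C * (4 * m + 2)).toNNReal with hKdef
  refine ⟨2 * K + 2, ?_⟩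
  intro φ hA
  obtain ⟨hφ, h1', h2', _⟩ := hA
  have hfd1 : ∀ z, ‖fderiv ℝ φ z‖ ≤ C * nrm z ^ (2 * m + 1) := by
    intro z
    have e : ‖fderiv ℝ φ z‖ = ‖iteratedFDeriv ℝ 1 φ z‖ := by
      have h := norm_iteratedFDeriv_fderiv (𝕜 := ℝ) (f := φ) (x := z) (n := 0)
      rw [norm_iteratedFDeriv_zero] at h
      simpa using h
    rw [e]; exact h1' z
  have hfd2 : ∀ z, ‖fderiv ℝ (fderiv ℝ φ) z‖ ≤ C * nrm z ^ (2 * m) := by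
    intro z
    have e1 : ‖fderiv ℝ (fderiv ℝ φ) z‖ = ‖iteratedFDeriv ℝ 1 (fderiv ℝ φ) z‖ := by
      have h := norm_iteratedFDeriv_fderiv (𝕜 := ℝ) (f := fderiv ℝ φ) (x := z) (n := 0)
      rw [norm_iteratedFDeriv_zero] at h
      simpa using h
    have e2 : ‖iteratedFDeriv ℝ 1 (fderiv ℝ φ) z‖ = ‖iteratedFDeriv ℝ 2 φ z‖ := by
      have h := norm_iteratedFDeriv_fderiv (𝕜 := ℝ) (f := φ) (x := z) (n := 1)
      simpa using h
    rw [e1, e2]; exact h2' z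
  have hA1 : LipschitzWith K
      (fun z : ℝ × ℝ => if z = 0 then 0 else phx φ z / w2m m z) := by
    have h := quot_lip m C hm hC φ hφ hfd1 hfd2 (1, 0)
      (by rw [Prod.norm_def]; simp)
    simpa only [phx] using h
  have hA2 : LipschitzWith K
      (fun z : ℝ × ℝ => if z = 0 then 0 else phy φ z / w2m m z) := by
    have h := quot_lip m C hm hC φ hφ hfd1 hfd2 (0, 1)
      (by rw [Prod.norm_def]; simp)
    simpa only [phy] using h
  have hfeq : (fun z : ℝ × ℝ => if z = 0 then 0 else ZFnorm m φ z / nrm z ^ (2 * m)) =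
      fun z : ℝ × ℝ => Real.sqrt
        (((if z = 0 then 0 else phx φ z / w2m m z) - z.2) ^ 2 +
         ((if z = 0 then 0 else phy φ z / w2m m z) + z.1) ^ 2) := by
    funext z
    by_cases hz : z = 0
    · subst hz
      norm_num
    · rw [if_neg hz, if_neg hz, if_neg hz]
      have hr : 0 < nrm z := nrm_pos_s13 hz
      have hw : w2m m z = nrm z ^ (2 * m) := by
        rw [w2m, ← sq_nrm z]; exact rpow_of_sq (nrm_nonneg z) m
      have hwpos : 0 < w2m m z := by rw [hw]; exact Real.rpow_pos_of_pos hr _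
      have e1 : phx φ z / w2m m z - z.2 = ZFx m φ z / w2m m z := by
        rw [ZFx]; field_simp
      have e2 : phy φ z / w2m m z + z.1 = ZFy m φ z / w2m m z := by
        rw [ZFy]; field_simp
      rw [← hw, e1, e2, div_pow, div_pow, ← add_div,
        Real.sqrt_div (by positivity), Real.sqrt_sq hwpos.le, ZFnorm]
  rw [hfeq]
  apply LipschitzWith.of_dist_le_mul
  intro z w
  rw [Real.dist_eq]
  have d1 : |(if z = 0 then 0 else phx φ z / w2m m z) -
      (if w = 0 then 0 else phx φ w / w2m m w)| ≤ K * dist z w := by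
    have := hA1.dist_le_mul z w
    rwa [Real.dist_eq] at this
  have d2 : |(if z = 0 then 0 else phy φ z / w2m m z) -
      (if w = 0 then 0 else phy φ w / w2m m w)| ≤ K * dist z w := by
    have := hA2.dist_le_mul z w
    rwa [Real.dist_eq] at this
  have d3 : |z.2 - w.2| ≤ dist z w := by
    rw [dist_eq_norm]
    have := norm_snd_le (z - w)
    simpa [Real.norm_eq_abs] using this
  have d4 : |z.1 - w.1| ≤ dist z w := by
    rw [dist_eq_norm]
    have := norm_fst_le (z - w)
    simpa [Real.norm_eq_abs] using this
  calc |Real.sqrt (((if z = 0 then 0 else phx φ z / w2m m z) - z.2) ^ 2 +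
          ((if z = 0 then 0 else phy φ z / w2m m z) + z.1) ^ 2) -
        Real.sqrt (((if w = 0 then 0 else phx φ w / w2m m w) - w.2) ^ 2 +
          ((if w = 0 then 0 else phy φ w / w2m m w) + w.1) ^ 2)|
      ≤ |((if z = 0 then 0 else phx φ z / w2m m z) - z.2) -
          ((if w = 0 then 0 else phx φ w / w2m m w) - w.2)| +
        |((if z = 0 then 0 else phy φ z / w2m m z) + z.1) -
          ((if w = 0 then 0 else phy φ w / w2m m w) + w.1)| := sqrt_diff_le _ _ _ _
    _ ≤ (|(if z = 0 then 0 else phx φ z / w2m m z) -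
          (if w = 0 then 0 else phx φ w / w2m m w)| + |z.2 - w.2|) +
        (|(if z = 0 then 0 else phy φ z / w2m m z) -
          (if w = 0 then 0 else phy φ w / w2m m w)| + |z.1 - w.1|) := by
        apply add_le_add
        · have e : ((if z = 0 then 0 else phx φ z / w2m m z) - z.2) -
              ((if w = 0 then 0 else phx φ w / w2m m w) - w.2) =
              ((if z = 0 then 0 else phx φ z / w2m m z) -
                (if w = 0 then 0 else phx φ w / w2m m w)) - (z.2 - w.2) := by ring
          rw [e]; exact abs_sub _ _
        · have e : ((if z = 0 then 0 else phy φ z / w2m m z) + z.1) -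
              ((if w = 0 then 0 else phy φ w / w2m m w) + w.1) =
              ((if z = 0 then 0 else phy φ z / w2m m z) -
                (if w = 0 then 0 else phy φ w / w2m m w)) - (w.1 - z.1) := by ring
          rw [e]
          refine (abs_sub _ _).trans ?_
          rw [abs_sub_comm w.1 z.1]
    _ ≤ (K * dist z w + dist z w) + (K * dist z w + dist z w) :=
        add_le_add (add_le_add d1 d3) (add_le_add d2 d4)
    _ = (2 * (K : ℝ) + 2) * dist z w := by ring
    _ = ((2 * K + 2 : NNReal) : ℝ) * dist z w := by push_cast; ring
end
end
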